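/- arXiv:math/0410504 — 8 statements merged into one kernel-verified Lean document; each statement's English description precedes it below -/
import Mathlib

section
/- Let T be a Borel automorphism of a standard Borel space (X, 𝓑) and let F₁, …, Fₙ be Borel subsets of X. Then there exists a smooth Borel automorphism S of X such that S(Fᵢ) = T(Fᵢ) for every i = 1, …, n. (Density of the smooth automorphisms in Aut(X, 𝓑) with respect to the weak topology p.) -/
open MeasureTheory Set

/-- `T` is a Borel automorphism: both `T` and its inverse are measurable. -/
def IsBorelAuto {X : Type*} [MeasurableSpace X] (T : Equiv.Perm X) : Prop :=
  Measurable T ∧ Measurable T.symm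

/-- `T` is smooth: some Borel set meets every `T`-orbit in exactly one point. -/
def IsSmooth {X : Type*} [MeasurableSpace X] (T : Equiv.Perm X) : Prop :=
  ∃ A : Set X, MeasurableSet A ∧ ∀ x : X, ∃! a, a ∈ A ∧ ∃ n : ℤ, (T ^ n) x = a

namespace SmoothDenseAux

open scoped Classical

variable {X : Type*} (T : Equiv.Perm X) (γ : X → ℕ)

/-- iterate of `T` -/
def ph (k : ℤ) : X → X := ⇑(T ^ k)

/-- label of the `B`-atom containing `x` -/
def lb (x : X) : ℕ := γ (T.symm x)

lemma ph_add (a b : ℤ) (x : X) : ph T (a + b) x = ph T a (ph T b x) := by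
  simp [ph, zpow_add, Equiv.Perm.mul_apply]

lemma ph_zero (x : X) : ph T 0 x = x := by simp [ph]

lemma ph_one (x : X) : ph T 1 x = T x := by simp [ph]

lemma ph_neg_one (x : X) : ph T (-1) x = T.symm x := by
  simp [ph]

lemma ph_cancel (a : ℤ) (x : X) : ph T a (ph T (-a) x) = x := by
  rw [← ph_add]; simp [ph_zero]

def Fwd (c : ℕ) (x : X) : Prop := ∀ N : ℤ, ∃ k : ℤ, N ≤ k ∧ lb T γ (ph T k x) = c

def Bwd (c : ℕ) (x : X) : Prop := ∀ N : ℤ, ∃ k : ℤ, k ≤ N ∧ lb T γ (ph T k x) = c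

def RecL (c : ℕ) (x : X) : Prop := Fwd T γ c x ∧ Bwd T γ c x

def RecP (x : X) : Prop := ∃ c, RecL T γ c x

lemma fwd_ph (c : ℕ) (m : ℤ) (x : X) : Fwd T γ c (ph T m x) ↔ Fwd T γ c x := by
  constructor
  · intro h N
    obtain ⟨k, hk, hl⟩ := h (N - m)
    exact ⟨k + m, by omega, by rwa [ph_add]⟩
  · intro h N
    obtain ⟨k, hk, hl⟩ := h (N + m)
    exact ⟨k - m, by omega, by rwa [← ph_add, sub_add_cancel]⟩

lemma bwd_ph (c : ℕ) (m : ℤ) (x : X) : Bwd T γ c (ph T m x) ↔ Bwd T γ c x := by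
  constructor
  · intro h N
    obtain ⟨k, hk, hl⟩ := h (N - m)
    exact ⟨k + m, by omega, by rwa [ph_add]⟩
  · intro h N
    obtain ⟨k, hk, hl⟩ := h (N + m)
    exact ⟨k - m, by omega, by rwa [← ph_add, sub_add_cancel]⟩

lemma recP_ph (m : ℤ) (x : X) : RecP T γ (ph T m x) ↔ RecP T γ x := by
  unfold RecP RecL
  simp only [fwd_ph, bwd_ph]

/-- least two-sided recurrent label -/
noncomputable def cR (x : X) : ℕ :=
  if h : ∃ c, RecL T γ c x then Nat.find h else 0

lemma cR_ph (m : ℤ) (x : X) : cR T γ (ph T m x) = cR T γ x := by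
  unfold cR
  have : (∃ c, RecL T γ c (ph T m x)) ↔ ∃ c, RecL T γ c x := by
    unfold RecL; simp only [fwd_ph, bwd_ph]
  by_cases h : ∃ c, RecL T γ c x
  · rw [dif_pos h, dif_pos (this.mpr h)]
    congr 1
    ext c
    unfold RecL
    simp only [fwd_ph, bwd_ph]
  · rw [dif_neg h, dif_neg (fun hh => h (this.mp hh))]

/-- cut points -/
def D (x : X) : Prop := RecP T γ x ∧ lb T γ x = cR T γ x


lemma D_recP {x : X} (h : D T γ x) : RecP T γ x := h.1

/-- least `j ≥ 0` with `T^{-j} x ∈ D` -/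
noncomputable def jj (x : X) : ℕ :=
  if h : ∃ j : ℕ, D T γ (ph T (-(j:ℤ)) x) then Nat.find h else 0

/-- least `i ≥ 0` with `T^{i+1} x ∈ D` -/
noncomputable def ii (x : X) : ℕ :=
  if h : ∃ i : ℕ, D T γ (ph T ((i:ℤ)+1) x) then Nat.find h else 0

lemma cR_spec {x : X} (h : RecP T γ x) : RecL T γ (cR T γ x) x := by
  unfold cR
  unfold RecP at h
  rw [dif_pos h]
  exact Nat.find_spec h

lemma D_of_rec_lb {x : X} (k : ℤ) (hr : RecP T γ x)
    (hl : lb T γ (ph T k x) = cR T γ x) : D T γ (ph T k x) := by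
  refine ⟨(recP_ph T γ k x).mpr hr, ?_⟩
  rw [cR_ph]; exact hl

lemma jj_exists {x : X} (h : RecP T γ x) : ∃ j : ℕ, D T γ (ph T (-(j:ℤ)) x) := by
  obtain ⟨k, hk, hl⟩ := (cR_spec T γ h).2 0
  refine ⟨(-k).toNat, ?_⟩
  have : (-((-k).toNat : ℤ)) = k := by omega
  rw [this]
  exact D_of_rec_lb T γ k h hl

lemma ii_exists {x : X} (h : RecP T γ x) : ∃ i : ℕ, D T γ (ph T ((i:ℤ)+1) x) := by
  obtain ⟨k, hk, hl⟩ := (cR_spec T γ h).1 1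
  refine ⟨(k-1).toNat, ?_⟩
  have : ((k-1).toNat : ℤ) + 1 = k := by omega
  rw [this]
  exact D_of_rec_lb T γ k h hl

lemma jj_spec {x : X} (h : RecP T γ x) :
    D T γ (ph T (-(jj T γ x : ℤ)) x) ∧ ∀ m : ℕ, m < jj T γ x → ¬ D T γ (ph T (-(m:ℤ)) x) := by
  unfold jj
  rw [dif_pos (jj_exists T γ h)]
  exact ⟨Nat.find_spec (jj_exists T γ h), fun m hm => Nat.find_min _ hm⟩

lemma ii_spec {x : X} (h : RecP T γ x) :
    D T γ (ph T ((ii T γ x : ℤ)+1) x) ∧ ∀ m : ℕ, m < ii T γ x → ¬ D T γ (ph T ((m:ℤ)+1) x) := by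
  unfold ii
  rw [dif_pos (ii_exists T γ h)]
  exact ⟨Nat.find_spec (ii_exists T γ h), fun m hm => Nat.find_min _ hm⟩

/-- block start point -/
noncomputable def dd (x : X) : X := ph T (-(jj T γ x : ℤ)) x

lemma dd_mem {x : X} (h : RecP T γ x) : D T γ (dd T γ x) := (jj_spec T γ h).1

lemma jj_of_D {x : X} (h : D T γ x) : jj T γ x = 0 := by
  unfold jj
  rw [dif_pos ⟨0, by simpa [ph_zero] using h⟩]
  simp only [Nat.find_eq_zero]
  simpa [ph_zero] using h

lemma dd_of_D {x : X} (h : D T γ x) : dd T γ x = x := by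
  unfold dd
  rw [jj_of_D T γ h]
  simp [ph_zero]

/-- the forward map -/
noncomputable def ff (x : X) : X := if D T γ (T x) then dd T γ x else T x

/-- the backward map -/
noncomputable def gg (y : X) : X := if D T γ y then ph T (ii T γ y : ℤ) y else T.symm y


lemma ph_ph (a b : ℤ) (x : X) : ph T a (ph T b x) = ph T (a+b) x := (ph_add T a b x).symm

lemma recP_T {x : X} (h : RecP T γ (T x)) : RecP T γ x := by
  rw [← ph_one T x] at h
  exact (recP_ph T γ 1 x).mp h

lemma gg_ff (x : X) : gg T γ (ff T γ x) = x := by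
  unfold ff
  by_cases hD : D T γ (T x)
  · rw [if_pos hD]
    have hr : RecP T γ x := recP_T T γ (D_recP T γ hD)
    have hdd : D T γ (dd T γ x) := dd_mem T γ hr
    unfold gg
    rw [if_pos hdd]
    set j := jj T γ x with hj
    have hrd : RecP T γ (dd T γ x) := hdd.1
    -- show ii (dd x) = j
    have hii : ii T γ (dd T γ x) = j := by
      have h1 := ii_spec T γ hrd
      have hwit : D T γ (ph T ((j:ℤ)+1) (dd T γ x)) := by
        unfold dd
        rw [ph_ph]
        have : (j:ℤ) + 1 + -(j:ℤ) = 1 := by ring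
        rw [this, ph_one]
        exact hD
      set iv := ii T γ (dd T γ x) with hiv
      rcases lt_trichotomy iv j with hlt | heq | hgt
      · exfalso
        have h2 := h1.1
        have hdef : dd T γ x = ph T (-(j:ℤ)) x := rfl
        rw [hdef, ph_ph] at h2
        have hcast : (iv : ℤ) + 1 + -(j:ℤ) = -((j - iv - 1 : ℕ) : ℤ) := by
          push_cast [Nat.cast_sub (by omega : iv + 1 ≤ j)]
          omega
        rw [hcast] at h2
        exact (jj_spec T γ hr).2 _ (by omega) h2
      · exact heq
      · exact absurd hwit (h1.2 j hgt)
    rw [hii]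
    unfold dd
    rw [ph_ph]
    have : (j:ℤ) + -(j:ℤ) = 0 := by ring
    rw [this, ph_zero]
  · rw [if_neg hD]
    unfold gg
    rw [if_neg hD]
    exact T.symm_apply_apply x

lemma ff_gg (y : X) : ff T γ (gg T γ y) = y := by
  unfold gg
  by_cases hD : D T γ y
  · rw [if_pos hD]
    have hr : RecP T γ y := hD.1
    set i := ii T γ y with hi
    set z := ph T (i:ℤ) y with hz
    have hrz : RecP T γ z := (recP_ph T γ (i:ℤ) y).mpr hr
    have hTz : D T γ (T z) := by
      rw [← ph_one T z, hz, ph_ph]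
      have : (1:ℤ) + (i:ℤ) = (i:ℤ) + 1 := by ring
      rw [this]
      exact (ii_spec T γ hr).1
    unfold ff
    rw [if_pos hTz]
    have hjz : jj T γ z = i := by
      have h1 := jj_spec T γ hrz
      have hwit : D T γ (ph T (-(i:ℤ)) z) := by
        rw [hz, ph_ph]
        have : -(i:ℤ) + (i:ℤ) = 0 := by ring
        rw [this, ph_zero]
        exact hD
      rcases lt_trichotomy (jj T γ z) i with hlt | heq | hgt
      · exfalso
        have h2 := h1.1
        rw [hz, ph_ph] at h2
        have hcast : -(jj T γ z : ℤ) + (i:ℤ) = ((i - jj T γ z - 1 : ℕ) : ℤ) + 1 := by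
          push_cast [Nat.cast_sub (by omega : jj T γ z + 1 ≤ i)]
          omega
        rw [hcast] at h2
        exact (ii_spec T γ hr).2 _ (by omega) h2
      · exact heq
      · exact absurd hwit (h1.2 i hgt)
    unfold dd
    rw [hjz, hz, ph_ph]
    have : -(i:ℤ) + (i:ℤ) = 0 := by ring
    rw [this, ph_zero]
  · rw [if_neg hD]
    unfold ff
    rw [T.apply_symm_apply, if_neg hD]

/-- the smooth automorphism -/
noncomputable def S : Equiv.Perm X := ⟨ff T γ, gg T γ, gg_ff T γ, ff_gg T γ⟩


lemma jj_eq {x : X} (hr : RecP T γ x) (m : ℕ) (hw : D T γ (ph T (-(m:ℤ)) x))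
    (hmin : ∀ m' : ℕ, m' < m → ¬ D T γ (ph T (-(m':ℤ)) x)) : jj T γ x = m := by
  rcases lt_trichotomy (jj T γ x) m with h | h | h
  · exact absurd (jj_spec T γ hr).1 (hmin _ h)
  · exact h
  · exact absurd hw ((jj_spec T γ hr).2 m h)

lemma lb_T (x : X) : lb T γ (T x) = γ x := by
  unfold lb
  rw [T.symm_apply_apply]

lemma lb_ff (x : X) : lb T γ (ff T γ x) = γ x := by
  unfold ff
  by_cases hD : D T γ (T x)
  · rw [if_pos hD]
    have hr : RecP T γ x := recP_T T γ (D_recP T γ hD)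
    have h1 : lb T γ (dd T γ x) = cR T γ (dd T γ x) := (dd_mem T γ hr).2
    have h2 : cR T γ (dd T γ x) = cR T γ x := cR_ph T γ _ x
    have h3 : lb T γ (T x) = cR T γ (T x) := hD.2
    have h4 : cR T γ (T x) = cR T γ x := by
      rw [← ph_one T x]; exact cR_ph T γ 1 x
    rw [h1, h2, ← h4, ← h3, lb_T]
  · rw [if_neg hD, lb_T]

lemma recP_ff (x : X) : RecP T γ (ff T γ x) ↔ RecP T γ x := by
  unfold ff
  by_cases hD : D T γ (T x)
  · rw [if_pos hD]
    exact recP_ph T γ _ x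
  · rw [if_neg hD, ← ph_one T x]
    exact recP_ph T γ 1 x

lemma recP_gg (y : X) : RecP T γ (gg T γ y) ↔ RecP T γ y := by
  have := recP_ff T γ (gg T γ y)
  rw [ff_gg] at this
  exact this.symm

lemma jj_T {x : X} (hr : RecP T γ x) (hD : ¬ D T γ (T x)) : jj T γ (T x) = jj T γ x + 1 := by
  have hrT : RecP T γ (T x) := by
    rw [← ph_one T x]; exact (recP_ph T γ 1 x).mpr hr
  apply jj_eq T γ hrT
  · have : ph T (-((jj T γ x + 1 : ℕ) : ℤ)) (T x) = ph T (-(jj T γ x : ℤ)) x := by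
      rw [← ph_one T x, ph_ph]
      congr 1
      push_cast; ring
    rw [this]
    exact (jj_spec T γ hr).1
  · intro m' hm'
    rcases Nat.eq_zero_or_pos m' with h0 | hpos
    · subst h0
      simpa [ph_zero] using hD
    · have : ph T (-((m' : ℕ) : ℤ)) (T x) = ph T (-((m' - 1 : ℕ) : ℤ)) x := by
        rw [← ph_one T x, ph_ph]
        congr 1
        push_cast [Nat.cast_sub hpos]
        ring
      rw [this]
      exact (jj_spec T γ hr).2 (m' - 1) (by omega)

lemma dd_ff {x : X} (hr : RecP T γ x) : dd T γ (ff T γ x) = dd T γ x := by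
  unfold ff
  by_cases hD : D T γ (T x)
  · rw [if_pos hD]
    exact dd_of_D T γ (dd_mem T γ hr)
  · rw [if_neg hD]
    unfold dd
    rw [jj_T T γ hr hD, ← ph_one T x, ph_ph]
    congr 1
    push_cast; ring

lemma dd_gg {y : X} (hr : RecP T γ y) : dd T γ (gg T γ y) = dd T γ y := by
  have hrg : RecP T γ (gg T γ y) := (recP_gg T γ y).mpr hr
  have := dd_ff T γ hrg
  rw [ff_gg] at this
  exact this.symm

lemma coe_S : ⇑(S T γ) = ff T γ := rfl

lemma coe_S_symm : ⇑(S T γ)⁻¹ = gg T γ := rfl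

lemma recP_S_pow (m : ℕ) (x : X) : RecP T γ (((S T γ) ^ m) x) ↔ RecP T γ x := by
  induction m generalizing x with
  | zero => simp
  | succ k ih =>
    rw [pow_succ, Equiv.Perm.mul_apply]
    have h1 : (S T γ) x = ff T γ x := rfl
    rw [h1, ih (ff T γ x)]
    exact recP_ff T γ x

lemma dd_S_pow (m : ℕ) {x : X} (hr : RecP T γ x) : dd T γ (((S T γ) ^ m) x) = dd T γ x := by
  induction m generalizing x with
  | zero => simp
  | succ k ih =>
    rw [pow_succ, Equiv.Perm.mul_apply]
    have h1 : ((S T γ) : Equiv.Perm X) x = ff T γ x := rfl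
    rw [h1]
    rw [ih ((recP_ff T γ x).mpr hr)]
    exact dd_ff T γ hr

lemma recP_S_inv_pow (m : ℕ) (x : X) : RecP T γ (((S T γ)⁻¹ ^ m) x) ↔ RecP T γ x := by
  induction m generalizing x with
  | zero => simp
  | succ k ih =>
    rw [pow_succ, Equiv.Perm.mul_apply]
    have h1 : ((S T γ)⁻¹ : Equiv.Perm X) x = gg T γ x := rfl
    rw [h1, ih (gg T γ x)]
    exact recP_gg T γ x

lemma dd_S_inv_pow (m : ℕ) {x : X} (hr : RecP T γ x) : dd T γ (((S T γ)⁻¹ ^ m) x) = dd T γ x := by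
  induction m generalizing x with
  | zero => simp
  | succ k ih =>
    rw [pow_succ, Equiv.Perm.mul_apply]
    have h1 : ((S T γ)⁻¹ : Equiv.Perm X) x = gg T γ x := rfl
    rw [h1, ih ((recP_gg T γ x).mpr hr)]
    exact dd_gg T γ hr

lemma recP_S_zpow (n : ℤ) (x : X) : RecP T γ (((S T γ) ^ n) x) ↔ RecP T γ x := by
  cases n with
  | ofNat m => rw [Int.ofNat_eq_coe, zpow_natCast]; exact recP_S_pow T γ m x
  | negSucc m => rw [zpow_negSucc, ← inv_pow]; exact recP_S_inv_pow T γ (m+1) x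

lemma dd_S_zpow (n : ℤ) {x : X} (hr : RecP T γ x) : dd T γ (((S T γ) ^ n) x) = dd T γ x := by
  cases n with
  | ofNat m => rw [Int.ofNat_eq_coe, zpow_natCast]; exact dd_S_pow T γ m hr
  | negSucc m => rw [zpow_negSucc, ← inv_pow]; exact dd_S_inv_pow T γ (m+1) hr


lemma x_eq_ph_dd (x : X) : ph T (jj T γ x : ℤ) (dd T γ x) = x := by
  unfold dd
  rw [ph_ph]
  have : (jj T γ x : ℤ) + -(jj T γ x : ℤ) = 0 := by ring
  rw [this, ph_zero]

lemma jj_le_ii {x : X} (hr : RecP T γ x) : jj T γ x ≤ ii T γ (dd T γ x) := by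
  by_contra h
  push_neg at h
  set L := ii T γ (dd T γ x) with hL
  have h1 : D T γ (ph T ((L:ℤ)+1) (dd T γ x)) := (ii_spec T γ (dd_mem T γ hr).1).1
  have h2 : ph T ((L:ℤ)+1) (dd T γ x) = ph T (-((jj T γ x - L - 1 : ℕ) : ℤ)) x := by
    unfold dd
    rw [ph_ph]
    congr 1
    push_cast [Nat.cast_sub (by omega : L + 1 ≤ jj T γ x)]
    omega
  rw [h2] at h1
  exact (jj_spec T γ hr).2 _ (by omega) h1

lemma Tx_eq (x : X) : T x = ph T ((jj T γ x : ℤ) + 1) (dd T γ x) := by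
  rw [← ph_one T x]
  conv_lhs => rw [← x_eq_ph_dd T γ x]
  rw [ph_ph]
  congr 1
  ring

lemma reach_aux (k : ℕ) : ∀ x : X, RecP T γ x → ii T γ (dd T γ x) - jj T γ x = k →
    ∃ m : ℕ, ((S T γ) ^ m) x = dd T γ x := by
  induction k with
  | zero =>
    intro x hr hk
    have hle := jj_le_ii T γ hr
    have heq : jj T γ x = ii T γ (dd T γ x) := by omega
    have hD : D T γ (T x) := by
      rw [Tx_eq T γ x, heq]
      exact (ii_spec T γ (dd_mem T γ hr).1).1
    refine ⟨1, ?_⟩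
    rw [pow_one]
    show ff T γ x = dd T γ x
    unfold ff
    rw [if_pos hD]
  | succ k ih =>
    intro x hr hk
    have hlt : jj T γ x < ii T γ (dd T γ x) := by
      have := jj_le_ii T γ hr
      omega
    have hD : ¬ D T γ (T x) := by
      rw [Tx_eq T γ x]
      exact (ii_spec T γ (dd_mem T γ hr).1).2 (jj T γ x) hlt
    have hffx : ff T γ x = T x := by unfold ff; rw [if_neg hD]
    have hrT : RecP T γ (T x) := by
      rw [← hffx]
      exact (recP_ff T γ x).mpr hr
    have hddT : dd T γ (T x) = dd T γ x := by
      rw [← hffx]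
      exact dd_ff T γ hr
    have hjT : jj T γ (T x) = jj T γ x + 1 := jj_T T γ hr hD
    obtain ⟨m, hm⟩ := ih (T x) hrT (by rw [hddT, hjT]; omega)
    refine ⟨m + 1, ?_⟩
    rw [pow_succ, Equiv.Perm.mul_apply]
    have h1 : (S T γ) x = ff T γ x := rfl
    rw [h1, hffx, hm, hddT]

lemma reach {x : X} (hr : RecP T γ x) : ∃ m : ℕ, ((S T γ) ^ m) x = dd T γ x :=
  reach_aux T γ _ x hr rfl


section Trans

lemma fwd_total (hfin : (Set.range γ).Finite) (x : X) : ∃ c, Fwd T γ c x := by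
  set u : ℕ → ℕ := fun k => lb T γ (ph T (k : ℤ) x) with hu
  have hru : (Set.range u).Finite := by
    apply hfin.subset
    rintro _ ⟨k, rfl⟩
    exact ⟨T.symm (ph T (k:ℤ) x), rfl⟩
  have : ∃ c, (u ⁻¹' {c}).Infinite := by
    by_contra h
    push_neg at h
    have : (Set.univ : Set ℕ).Finite := by
      have : (Set.univ : Set ℕ) ⊆ ⋃ c ∈ Set.range u, u ⁻¹' {c} := by
        intro k _
        simp only [Set.mem_iUnion]
        exact ⟨u k, ⟨k, rfl⟩, rfl⟩
      exact (hru.biUnion (fun c _ => h c)).subset this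
    exact Set.infinite_univ this
  obtain ⟨c, hc⟩ := this
  refine ⟨c, fun N => ?_⟩
  have : ∃ k ∈ u ⁻¹' {c}, N.toNat < k := by
    by_contra h
    push_neg at h
    exact hc (Set.Finite.subset (Set.finite_Iic N.toNat) (fun k hk => h k hk))
  obtain ⟨k, hk, hNk⟩ := this
  exact ⟨(k : ℤ), by omega, hk⟩

/-- least forward-recurrent label -/
noncomputable def cT (x : X) : ℕ := if h : ∃ c, Fwd T γ c x then Nat.find h else 0

lemma cT_spec (hfin : (Set.range γ).Finite) (x : X) : Fwd T γ (cT T γ x) x := by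
  unfold cT
  rw [dif_pos (fwd_total T γ hfin x)]
  exact Nat.find_spec (fwd_total T γ hfin x)

lemma cT_ph (m : ℤ) (x : X) : cT T γ (ph T m x) = cT T γ x := by
  unfold cT
  have hiff : (∃ c, Fwd T γ c (ph T m x)) ↔ ∃ c, Fwd T γ c x := by
    simp only [fwd_ph]
  by_cases h : ∃ c, Fwd T γ c x
  · rw [dif_pos h, dif_pos (hiff.mpr h)]
    congr 1
    ext c
    simp only [fwd_ph]
  · rw [dif_neg h, dif_neg (fun hh => h (hiff.mp hh))]

def Kp (x : X) (k : ℤ) : Prop := lb T γ (ph T k x) = cT T γ x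

lemma kp_bdd (hfin : (Set.range γ).Finite) {x : X} (ht : ¬ RecP T γ x) :
    ∃ b : ℤ, ∀ z : ℤ, Kp T γ x z → b ≤ z := by
  by_contra h
  push_neg at h
  apply ht
  refine ⟨cT T γ x, cT_spec T γ hfin x, fun N => ?_⟩
  obtain ⟨z, hz, hzN⟩ := h N
  exact ⟨z, by omega, hz⟩

noncomputable def k0 (x : X) : ℤ :=
  if h : ∃ m : ℤ, Kp T γ x m ∧ ∀ z, Kp T γ x z → m ≤ z then h.choose else 0

lemma k0_spec (hfin : (Set.range γ).Finite) {x : X} (ht : ¬ RecP T γ x) :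
    Kp T γ x (k0 T γ x) ∧ ∀ z, Kp T γ x z → k0 T γ x ≤ z := by
  have hex : ∃ m : ℤ, Kp T γ x m ∧ ∀ z, Kp T γ x z → m ≤ z := by
    obtain ⟨lb', h1, h2⟩ := Int.exists_least_of_bdd (kp_bdd T γ hfin ht)
      (by obtain ⟨k, _, hk⟩ := cT_spec T γ hfin x 0; exact ⟨k, hk⟩)
    exact ⟨lb', h1, h2⟩
  unfold k0
  rw [dif_pos hex]
  exact hex.choose_spec

/-- basepoint for transient orbits -/
noncomputable def bb (x : X) : X := ph T (k0 T γ x) x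

/-- transversal points of transient orbits -/
def Bse (x : X) : Prop := ¬ RecP T γ x ∧ lb T γ x = cT T γ x ∧ ∀ m : ℤ, m < 0 → ¬ Kp T γ x m

lemma kp_T (x : X) (m : ℤ) : Kp T γ (T x) m ↔ Kp T γ x (m + 1) := by
  unfold Kp
  rw [← ph_one T x, ph_ph, cT_ph]

lemma k0_T (hfin : (Set.range γ).Finite) {x : X} (ht : ¬ RecP T γ x) :
    k0 T γ (T x) = k0 T γ x - 1 := by
  have htT : ¬ RecP T γ (T x) := by
    rw [← ph_one T x, recP_ph]; exact ht
  have hs := k0_spec T γ hfin ht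
  have hsT := k0_spec T γ hfin htT
  have h1 : Kp T γ (T x) (k0 T γ x - 1) := by
    rw [kp_T]
    simpa using hs.1
  have h2 : Kp T γ x (k0 T γ (T x) + 1) := (kp_T T γ x _).mp hsT.1
  have := hsT.2 _ h1
  have := hs.2 _ h2
  omega

lemma bb_T (hfin : (Set.range γ).Finite) {x : X} (ht : ¬ RecP T γ x) :
    bb T γ (T x) = bb T γ x := by
  unfold bb
  rw [k0_T T γ hfin ht, ← ph_one T x, ph_ph]
  congr 1
  ring

lemma ff_trans {x : X} (ht : ¬ RecP T γ x) : ff T γ x = T x := by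
  unfold ff
  rw [if_neg]
  intro hD
  exact ht (recP_T T γ (D_recP T γ hD))

lemma gg_trans {y : X} (ht : ¬ RecP T γ y) : gg T γ y = T.symm y := by
  unfold gg
  rw [if_neg (fun hD => ht (D_recP T γ hD))]

lemma bb_ff (hfin : (Set.range γ).Finite) {x : X} (ht : ¬ RecP T γ x) :
    bb T γ (ff T γ x) = bb T γ x := by
  rw [ff_trans T γ ht]
  exact bb_T T γ hfin ht

lemma bb_gg (hfin : (Set.range γ).Finite) {y : X} (ht : ¬ RecP T γ y) :
    bb T γ (gg T γ y) = bb T γ y := by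
  have htg : ¬ RecP T γ (gg T γ y) := fun h => ht ((recP_gg T γ y).mp h)
  have := bb_ff T γ hfin htg
  rw [ff_gg] at this
  exact this.symm

lemma S_pow_trans (hfin : (Set.range γ).Finite) (m : ℕ) {x : X} (ht : ¬ RecP T γ x) :
    ((S T γ) ^ m) x = ph T (m : ℤ) x ∧ bb T γ (((S T γ) ^ m) x) = bb T γ x := by
  induction m generalizing x with
  | zero => simp [ph_zero]
  | succ k ih =>
    have htT : ¬ RecP T γ (T x) := by
      rw [← ph_one T x, recP_ph]; exact ht
    obtain ⟨ih1, ih2⟩ := ih htT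
    constructor
    · rw [pow_succ, Equiv.Perm.mul_apply]
      have h1 : (S T γ) x = ff T γ x := rfl
      rw [h1, ff_trans T γ ht, ih1, ← ph_one T x, ph_ph]
      congr 1
    · rw [pow_succ, Equiv.Perm.mul_apply]
      have h1 : (S T γ) x = ff T γ x := rfl
      rw [h1, ff_trans T γ ht, ih2]
      exact bb_T T γ hfin ht

lemma S_zpow_trans (hfin : (Set.range γ).Finite) (n : ℤ) {x : X} (ht : ¬ RecP T γ x) :
    ((S T γ) ^ n) x = ph T n x ∧ bb T γ (((S T γ) ^ n) x) = bb T γ x := by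
  cases n with
  | ofNat m =>
    rw [Int.ofNat_eq_coe, zpow_natCast]
    exact S_pow_trans T γ hfin m ht
  | negSucc m =>
    rw [zpow_negSucc, ← inv_pow]
    -- prove by induction on inverse
    induction m generalizing x with
    | zero =>
      have h1 : (S T γ)⁻¹ x = gg T γ x := rfl
      constructor
      · rw [pow_one, h1, gg_trans T γ ht, ← ph_neg_one T x]
        congr 1
      · rw [pow_one, h1]
        exact bb_gg T γ hfin ht
    | succ k ihk =>
      have htg : ¬ RecP T γ (gg T γ x) := fun h => ht ((recP_gg T γ x).mp h)
      obtain ⟨ih1, ih2⟩ := ihk htg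
      have h1 : (S T γ)⁻¹ x = gg T γ x := rfl
      have hgx : gg T γ x = ph T (-1) x := by
        rw [gg_trans T γ ht, ph_neg_one]
      constructor
      · rw [pow_succ, Equiv.Perm.mul_apply, h1, ih1, hgx, ph_ph]
        congr 1
      · rw [pow_succ, Equiv.Perm.mul_apply, h1, ih2]
        exact bb_gg T γ hfin ht

end Trans


lemma kp_ph (a : ℤ) (x : X) (m : ℤ) : Kp T γ (ph T a x) m ↔ Kp T γ x (m + a) := by
  unfold Kp
  rw [ph_ph, cT_ph]

lemma bb_mem (hfin : (Set.range γ).Finite) {x : X} (ht : ¬ RecP T γ x) : Bse T γ (bb T γ x) := by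
  have hs := k0_spec T γ hfin ht
  refine ⟨?_, ?_, ?_⟩
  · unfold bb
    rw [recP_ph]
    exact ht
  · show lb T γ (bb T γ x) = cT T γ (bb T γ x)
    unfold bb
    rw [cT_ph]
    exact hs.1
  · intro m hm hK
    unfold bb at hK
    rw [kp_ph] at hK
    have := hs.2 _ hK
    omega

lemma bse_eq_bb (hfin : (Set.range γ).Finite) {a : X} (hb : Bse T γ a) : bb T γ a = a := by
  have hs := k0_spec T γ hfin hb.1
  have h0 : Kp T γ a 0 := by
    unfold Kp
    rw [ph_zero]
    exact hb.2.1
  have h1 : k0 T γ a ≤ 0 := hs.2 0 h0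
  have h2 : ¬ (k0 T γ a < 0) := fun h => hb.2.2 _ h hs.1
  have : k0 T γ a = 0 := by omega
  unfold bb
  rw [this, ph_zero]

/-- the transversal -/
def Aset : Set X := {x | D T γ x ∨ Bse T γ x}

theorem S_smooth_orbits (hfin : (Set.range γ).Finite) (x : X) :
    ∃! a, a ∈ Aset T γ ∧ ∃ n : ℤ, ((S T γ) ^ n) x = a := by
  by_cases hr : RecP T γ x
  · refine ⟨dd T γ x, ⟨Or.inl (dd_mem T γ hr), ?_⟩, ?_⟩
    · obtain ⟨m, hm⟩ := reach T γ hr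
      exact ⟨(m : ℤ), by rw [zpow_natCast]; exact hm⟩
    · rintro a' ⟨ha', n, hn⟩
      have hra' : RecP T γ a' := by
        rw [← hn]
        exact (recP_S_zpow T γ n x).mpr hr
      rcases ha' with hD | hB
      · have e1 : a' = dd T γ a' := (dd_of_D T γ hD).symm
        rw [e1, ← hn, dd_S_zpow T γ n hr]
      · exact absurd hra' hB.1
  · refine ⟨bb T γ x, ⟨Or.inr (bb_mem T γ hfin hr), ?_⟩, ?_⟩
    · exact ⟨k0 T γ x, (S_zpow_trans T γ hfin _ hr).1⟩
    · rintro a' ⟨ha', n, hn⟩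
      have hra' : ¬ RecP T γ a' := by
        rw [← hn]
        intro h
        exact hr ((recP_S_zpow T γ n x).mp h)
      rcases ha' with hD | hB
      · exact absurd (D_recP T γ hD) hra'
      · have e1 : a' = bb T γ a' := (bse_eq_bb T γ hfin hB).symm
        rw [e1, ← hn, (S_zpow_trans T γ hfin n hr).2]


section Meas

variable [MeasurableSpace X]

lemma meas_pow (E : Equiv.Perm X) (hE : Measurable ⇑E) (m : ℕ) : Measurable ⇑(E ^ m) := by
  induction m with
  | zero => simpa [pow_zero] using measurable_id
  | succ k ih =>
    have : ⇑(E ^ (k+1)) = (⇑(E ^ k)) ∘ ⇑E := by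
      funext x
      rw [pow_succ, Equiv.Perm.mul_apply]
      rfl
    rw [this]
    exact ih.comp hE

lemma meas_ph (hT : IsBorelAuto T) (k : ℤ) : Measurable (ph T k) := by
  unfold ph
  cases k with
  | ofNat m =>
    rw [Int.ofNat_eq_coe, zpow_natCast]
    exact meas_pow T hT.1 m
  | negSucc m =>
    rw [zpow_negSucc, ← inv_pow]
    exact meas_pow T⁻¹ hT.2 (m+1)

lemma meas_lb (hT : IsBorelAuto T) (hγ : Measurable γ) : Measurable (lb T γ) :=
  hγ.comp hT.2

lemma measurableSet_fwd (hT : IsBorelAuto T) (hγ : Measurable γ) (c : ℕ) :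
    MeasurableSet {x | Fwd T γ c x} := by
  have : {x | Fwd T γ c x} =
      ⋂ N : ℤ, ⋃ k : ℤ, ⋃ (_ : N ≤ k), (fun x => lb T γ (ph T k x)) ⁻¹' {c} := by
    ext x
    simp [Fwd, Set.mem_iInter, Set.mem_iUnion, exists_prop]
  rw [this]
  exact MeasurableSet.iInter fun N => MeasurableSet.iUnion fun k => MeasurableSet.iUnion
    fun _ => ((meas_lb T γ hT hγ).comp (meas_ph T hT k)) (measurableSet_singleton c)

lemma measurableSet_bwd (hT : IsBorelAuto T) (hγ : Measurable γ) (c : ℕ) :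
    MeasurableSet {x | Bwd T γ c x} := by
  have : {x | Bwd T γ c x} =
      ⋂ N : ℤ, ⋃ k : ℤ, ⋃ (_ : k ≤ N), (fun x => lb T γ (ph T k x)) ⁻¹' {c} := by
    ext x
    simp [Bwd, Set.mem_iInter, Set.mem_iUnion, exists_prop]
  rw [this]
  exact MeasurableSet.iInter fun N => MeasurableSet.iUnion fun k => MeasurableSet.iUnion
    fun _ => ((meas_lb T γ hT hγ).comp (meas_ph T hT k)) (measurableSet_singleton c)

lemma measurableSet_recL (hT : IsBorelAuto T) (hγ : Measurable γ) (c : ℕ) :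
    MeasurableSet {x | RecL T γ c x} :=
  (measurableSet_fwd T γ hT hγ c).inter (measurableSet_bwd T γ hT hγ c)

lemma measurableSet_recP (hT : IsBorelAuto T) (hγ : Measurable γ) :
    MeasurableSet {x | RecP T γ x} := by
  have : {x | RecP T γ x} = ⋃ c : ℕ, {x | RecL T γ c x} := by
    ext x; simp [RecP]
  rw [this]
  exact MeasurableSet.iUnion fun c => measurableSet_recL T γ hT hγ c

lemma measurableSet_find {P : ℕ → X → Prop} (hP : ∀ c, MeasurableSet {x | P c x}) (c : ℕ) :
    MeasurableSet {x | (if h : ∃ c', P c' x then Nat.find h else 0) = c} := by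
  have heq : {x | (if h : ∃ c', P c' x then Nat.find h else 0) = c} =
      ({x | P c x} ∩ ⋂ (c' : ℕ), ⋂ (_ : c' < c), {x | P c' x}ᶜ) ∪
      ((⋂ c' : ℕ, {x | P c' x}ᶜ) ∩ {x : X | c = 0}) := by
    ext x
    simp only [Set.mem_union, Set.mem_inter_iff, Set.mem_iInter, Set.mem_compl_iff,
      Set.mem_setOf_eq]
    by_cases h : ∃ c', P c' x
    · rw [dif_pos h, Nat.find_eq_iff h]
      constructor
      · rintro ⟨h1, h2⟩
        exact Or.inl ⟨h1, h2⟩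
      · rintro (⟨h1, h2⟩ | ⟨h1, _⟩)
        · exact ⟨h1, h2⟩
        · obtain ⟨c', hc'⟩ := h
          exact absurd hc' (h1 c')
    · rw [dif_neg h]
      push_neg at h
      constructor
      · intro h0
        exact Or.inr ⟨h, h0.symm⟩
      · rintro (⟨h1, _⟩ | ⟨_, h2⟩)
        · exact absurd h1 (h c)
        · exact h2.symm
  rw [heq]
  refine MeasurableSet.union ((hP c).inter ?_) (MeasurableSet.inter ?_ (MeasurableSet.const _))
  · exact MeasurableSet.iInter fun c' => MeasurableSet.iInter fun _ => (hP c').compl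
  · exact MeasurableSet.iInter fun c' => (hP c').compl

lemma measurableSet_cR_eq (hT : IsBorelAuto T) (hγ : Measurable γ) (c : ℕ) :
    MeasurableSet {x | cR T γ x = c} :=
  measurableSet_find (fun c' => measurableSet_recL T γ hT hγ c') c

lemma measurableSet_cT_eq (hT : IsBorelAuto T) (hγ : Measurable γ) (c : ℕ) :
    MeasurableSet {x | cT T γ x = c} :=
  measurableSet_find (fun c' => measurableSet_fwd T γ hT hγ c') c

lemma measurableSet_D (hT : IsBorelAuto T) (hγ : Measurable γ) :
    MeasurableSet {x | D T γ x} := by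
  have : {x | D T γ x} = {x | RecP T γ x} ∩
      ⋃ c : ℕ, ({x | cR T γ x = c} ∩ (lb T γ) ⁻¹' {c}) := by
    ext x
    simp only [Set.mem_inter_iff, Set.mem_iUnion, Set.mem_setOf_eq, Set.mem_preimage,
      Set.mem_singleton_iff]
    constructor
    · intro h
      exact ⟨h.1, cR T γ x, rfl, h.2⟩
    · rintro ⟨h1, c, hc, hl⟩
      exact ⟨h1, by rw [hl, hc]⟩
  rw [this]
  exact (measurableSet_recP T γ hT hγ).inter (MeasurableSet.iUnion fun c =>
    (measurableSet_cR_eq T γ hT hγ c).inter ((meas_lb T γ hT hγ) (measurableSet_singleton c)))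

lemma measurableSet_jj_eq (hT : IsBorelAuto T) (hγ : Measurable γ) (m : ℕ) :
    MeasurableSet {x | jj T γ x = m} :=
  measurableSet_find (fun j => (meas_ph T hT (-(j:ℤ))) (measurableSet_D T γ hT hγ)) m

lemma measurableSet_ii_eq (hT : IsBorelAuto T) (hγ : Measurable γ) (m : ℕ) :
    MeasurableSet {x | ii T γ x = m} :=
  measurableSet_find (fun i => (meas_ph T hT ((i:ℤ)+1)) (measurableSet_D T γ hT hγ)) m

lemma measurable_glue {e : X → ℕ} (he : ∀ m, MeasurableSet {x | e x = m})
    {F : ℕ → X → X} (hF : ∀ m, Measurable (F m)) : Measurable (fun x => F (e x) x) := by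
  intro s hs
  have : (fun x => F (e x) x) ⁻¹' s = ⋃ m : ℕ, ({x | e x = m} ∩ F m ⁻¹' s) := by
    ext x
    simp only [Set.mem_preimage, Set.mem_iUnion, Set.mem_inter_iff, Set.mem_setOf_eq]
    constructor
    · intro h
      exact ⟨e x, rfl, h⟩
    · rintro ⟨m, hm, h⟩
      rwa [hm]
  rw [this]
  exact MeasurableSet.iUnion fun m => (he m).inter ((hF m) hs)

lemma meas_ff (hT : IsBorelAuto T) (hγ : Measurable γ) : Measurable (ff T γ) := by
  have heq : ff T γ = fun x =>
      (fun m => Nat.rec (motive := fun _ => X → X) (⇑T) (fun j _ => ph T (-(j:ℤ))) m)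
        (if D T γ (T x) then jj T γ x + 1 else 0) x := by
    funext x
    by_cases hD : D T γ (T x)
    · simp only [if_pos hD]
      show ff T γ x = ph T (-(jj T γ x : ℤ)) x
      unfold ff
      rw [if_pos hD]
      rfl
    · simp only [if_neg hD]
      show ff T γ x = T x
      unfold ff
      rw [if_neg hD]
  rw [heq]
  apply measurable_glue
  · intro m
    cases m with
    | zero =>
      have : {x | (if D T γ (T x) then jj T γ x + 1 else 0) = 0} = (⇑T) ⁻¹' {x | D T γ x}ᶜ := by
        ext x
        by_cases hD : D T γ (T x) <;> simp [hD]
      rw [this]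
      exact hT.1 (measurableSet_D T γ hT hγ).compl
    | succ m =>
      have : {x | (if D T γ (T x) then jj T γ x + 1 else 0) = m + 1} =
          (⇑T) ⁻¹' {x | D T γ x} ∩ {x | jj T γ x = m} := by
        ext x
        by_cases hD : D T γ (T x) <;> simp [hD]
      rw [this]
      exact (hT.1 (measurableSet_D T γ hT hγ)).inter (measurableSet_jj_eq T γ hT hγ m)
  · intro m
    cases m with
    | zero => exact hT.1
    | succ m => exact meas_ph T hT (-(m:ℤ))

lemma meas_gg (hT : IsBorelAuto T) (hγ : Measurable γ) : Measurable (gg T γ) := by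
  have heq : gg T γ = fun y =>
      (fun m => Nat.rec (motive := fun _ => X → X) (⇑T.symm) (fun i _ => ph T (i:ℤ)) m)
        (if D T γ y then ii T γ y + 1 else 0) y := by
    funext y
    by_cases hD : D T γ y
    · simp only [if_pos hD]
      show gg T γ y = ph T (ii T γ y : ℤ) y
      unfold gg
      rw [if_pos hD]
    · simp only [if_neg hD]
      show gg T γ y = T.symm y
      unfold gg
      rw [if_neg hD]
  rw [heq]
  apply measurable_glue
  · intro m
    cases m with
    | zero =>
      have : {y | (if D T γ y then ii T γ y + 1 else 0) = 0} = {y | D T γ y}ᶜ := by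
        ext y
        by_cases hD : D T γ y <;> simp [hD]
      rw [this]
      exact (measurableSet_D T γ hT hγ).compl
    | succ m =>
      have : {y | (if D T γ y then ii T γ y + 1 else 0) = m + 1} =
          {y | D T γ y} ∩ {y | ii T γ y = m} := by
        ext y
        by_cases hD : D T γ y <;> simp [hD]
      rw [this]
      exact (measurableSet_D T γ hT hγ).inter (measurableSet_ii_eq T γ hT hγ m)
  · intro m
    cases m with
    | zero => exact hT.2
    | succ m => exact meas_ph T hT (m:ℤ)

lemma measurableSet_kp (hT : IsBorelAuto T) (hγ : Measurable γ) (m : ℤ) :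
    MeasurableSet {x | Kp T γ x m} := by
  have : {x | Kp T γ x m} =
      ⋃ c : ℕ, ({x | cT T γ x = c} ∩ (fun x => lb T γ (ph T m x)) ⁻¹' {c}) := by
    ext x
    simp only [Kp, Set.mem_iUnion, Set.mem_inter_iff, Set.mem_setOf_eq, Set.mem_preimage,
      Set.mem_singleton_iff]
    constructor
    · intro h
      exact ⟨cT T γ x, rfl, h⟩
    · rintro ⟨c, hc, hl⟩
      rw [hl, hc]
  rw [this]
  exact MeasurableSet.iUnion fun c => (measurableSet_cT_eq T γ hT hγ c).inter
    (((meas_lb T γ hT hγ).comp (meas_ph T hT m)) (measurableSet_singleton c))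

lemma measurableSet_bse (hT : IsBorelAuto T) (hγ : Measurable γ) :
    MeasurableSet {x | Bse T γ x} := by
  have : {x | Bse T γ x} = {x | RecP T γ x}ᶜ ∩
      ((⋃ c : ℕ, ({x | cT T γ x = c} ∩ (lb T γ) ⁻¹' {c})) ∩
       (⋂ (m : ℤ), ⋂ (_ : m < 0), {x | Kp T γ x m}ᶜ)) := by
    ext x
    simp only [Bse, Set.mem_inter_iff, Set.mem_compl_iff, Set.mem_setOf_eq, Set.mem_iUnion,
      Set.mem_iInter, Set.mem_preimage, Set.mem_singleton_iff]
    constructor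
    · rintro ⟨h1, h2, h3⟩
      exact ⟨h1, ⟨cT T γ x, rfl, h2⟩, fun m hm => h3 m hm⟩
    · rintro ⟨h1, ⟨c, hc, hl⟩, h3⟩
      exact ⟨h1, by rw [hl, hc], fun m hm => h3 m hm⟩
  rw [this]
  refine (measurableSet_recP T γ hT hγ).compl.inter (MeasurableSet.inter ?_ ?_)
  · exact MeasurableSet.iUnion fun c => (measurableSet_cT_eq T γ hT hγ c).inter
      ((meas_lb T γ hT hγ) (measurableSet_singleton c))
  · exact MeasurableSet.iInter fun m => MeasurableSet.iInter fun _ =>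
      (measurableSet_kp T γ hT hγ m).compl

lemma measurableSet_Aset (hT : IsBorelAuto T) (hγ : Measurable γ) :
    MeasurableSet (Aset T γ) :=
  (measurableSet_D T γ hT hγ).union (measurableSet_bse T γ hT hγ)

end Meas

theorem aux {X : Type*} [MeasurableSpace X] (T : Equiv.Perm X) (hT : IsBorelAuto T)
    (γ : X → ℕ) (hγ : Measurable γ) (hfin : (Set.range γ).Finite) :
    ∃ S' : Equiv.Perm X, IsBorelAuto S' ∧ IsSmooth S' ∧
      ∀ y, γ (S'.symm y) = γ (T.symm y) := by
  refine ⟨S T γ, ⟨meas_ff T γ hT hγ, meas_gg T γ hT hγ⟩,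
    ⟨Aset T γ, measurableSet_Aset T γ hT hγ, S_smooth_orbits T γ hfin⟩, fun y => ?_⟩
  have h1 : lb T γ (ff T γ (gg T γ y)) = γ (gg T γ y) := lb_ff T γ (gg T γ y)
  rw [ff_gg] at h1
  exact h1.symm

end SmoothDenseAux

/-- smooth automorphisms are dense in `(Aut(X, 𝓑), p)`. -/
theorem smooth_dense_weak {X : Type*} [MeasurableSpace X] [StandardBorelSpace X]
    (T : Equiv.Perm X) (hT : IsBorelAuto T)
    (n : ℕ) (F : Fin n → Set X) (hF : ∀ i, MeasurableSet (F i)) :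
    ∃ S : Equiv.Perm X, IsBorelAuto S ∧ IsSmooth S ∧
      ∀ i, (⇑S) '' F i = (⇑T) '' F i := by
  classical
  set enc : (Fin n → Bool) → ℕ := fun v => (Fintype.equivFin (Fin n → Bool) v : ℕ) with henc_def
  have henc : Function.Injective enc := fun a b h =>
    (Fintype.equivFin (Fin n → Bool)).injective (Fin.val_injective h)
  set γ : X → ℕ := fun x => enc (fun i => decide (x ∈ F i)) with hγ_def
  have hmem : ∀ x y : X, γ x = γ y ↔ ∀ i, (x ∈ F i ↔ y ∈ F i) := by
    intro x y
    constructor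
    · intro h i
      have h4 := congrFun (henc h) i
      exact decide_eq_decide.mp h4
    · intro h
      have : (fun i => decide (x ∈ F i)) = fun i => decide (y ∈ F i) := by
        funext i
        exact decide_eq_decide.mpr (h i)
      simp only [hγ_def, this]
  have hγ : Measurable γ := by
    apply measurable_to_nat
    intro y
    have : γ ⁻¹' {γ y} = ⋂ i, (if y ∈ F i then F i else (F i)ᶜ) := by
      ext x
      simp only [Set.mem_preimage, Set.mem_singleton_iff, Set.mem_iInter]
      rw [hmem x y]
      refine forall_congr' fun i => ?_
      by_cases hy : y ∈ F i
      · simp [hy]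
      · simp [hy]
    rw [this]
    exact MeasurableSet.iInter fun i => by
      by_cases hy : y ∈ F i
      · simpa [hy] using hF i
      · simpa [hy] using (hF i).compl
  have hfin : (Set.range γ).Finite := by
    apply (Set.finite_range enc).subset
    rintro _ ⟨x, rfl⟩
    exact ⟨_, rfl⟩
  obtain ⟨S', h1, h2, h3⟩ := SmoothDenseAux.aux T hT γ hγ hfin
  refine ⟨S', h1, h2, fun i => ?_⟩
  rw [Equiv.image_eq_preimage_symm, Equiv.image_eq_preimage_symm]
  ext y
  simp only [Set.mem_preimage]
  exact (hmem (S'.symm y) (T.symm y)).mp (h3 y) i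
end

section
/- Let T be an aperiodic Borel automorphism of a standard Borel space (X, 𝓑) and let F₁, …, Fₙ be Borel subsets of X. Then there exists an aperiodic smooth Borel automorphism S of X such that S(Fᵢ) = T(Fᵢ) for every i = 1, …, n. -/
open MeasureTheory Set

/-- `T` is aperiodic: no point is periodic. -/
def IsAperiodic {X : Type*} (T : Equiv.Perm X) : Prop :=
  ∀ (x : X) (n : ℤ), n ≠ 0 → (T ^ n) x ≠ x

/-!
Let `A_i` be the atoms of the finite Borel partition generated by the `F i`. It suffices to find a
Borel automorphism `S` with `S (A_i) = T (A_i)` together with a Borel `ψ : X → ℤ` such that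
`ψ ∘ S = ψ + 1`: then `S` has no periodic points and `{ψ = 0}` is a Borel transversal.

On the countable atoms `S = T`. Together with their `T`-images they form a countable set, on
which `ψ` counts steps along each `T`-orbit from a chosen base point; this needs aperiodicity but
no measurability. Off this set `ψ` is chosen Borel so that it cuts every uncountable atom into
uncountable slices `A_i ∩ {ψ = k}`, and likewise `T (A_i)` into slices `T (A_i) ∩ {ψ = k + 1}`; the
Borel isomorphism theorem then lets `S` carry each slice onto the corresponding one.
-/

open Equiv

section

variable {X : Type*}

section Shift

variable (S : Perm X) {ψ : X → ℤ}

theorem apply_zpow_of_apply_eq_add_one (hψ : ∀ x, ψ (S x) = ψ x + 1) (m : ℤ) (x : X) :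
    ψ ((S ^ m) x) = ψ x + m := by
  induction m using Int.induction_on generalizing x with
  | zero => simp
  | succ i ih => rw [zpow_add_one, Perm.mul_apply, ih, hψ]; ring
  | pred i ih =>
    have h := hψ (S.symm x)
    rw [apply_symm_apply] at h
    rw [zpow_sub_one, Perm.mul_apply, Perm.inv_def, ih]
    omega

theorem isAperiodic_of_apply_eq_add_one (hψ : ∀ x, ψ (S x) = ψ x + 1) : IsAperiodic S := by
  intro x m hm hfix
  have := apply_zpow_of_apply_eq_add_one S hψ m x
  rw [hfix] at this
  omega

theorem isSmooth_of_apply_eq_add_one [MeasurableSpace X] (hψm : Measurable ψ)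
    (hψ : ∀ x, ψ (S x) = ψ x + 1) : IsSmooth S := by
  refine ⟨ψ ⁻¹' {0}, hψm (measurableSet_singleton 0),
    fun x => ⟨(S ^ (-ψ x)) x, ⟨?_, -ψ x, rfl⟩, ?_⟩⟩
  · rw [mem_preimage, apply_zpow_of_apply_eq_add_one S hψ, mem_singleton_iff]
    omega
  · rintro _ ⟨hb, m, rfl⟩
    rw [mem_preimage, apply_zpow_of_apply_eq_add_one S hψ, mem_singleton_iff] at hb
    rw [show m = -ψ x by omega]

end Shift

theorem IsAperiodic.zpow_apply_injective {T : Perm X} (hT : IsAperiodic T) (x : X) :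
    Function.Injective fun m : ℤ => (T ^ m) x := by
  intro a b h
  by_contra hne
  apply hT x (a - b) (sub_ne_zero.2 hne)
  rw [← neg_add_eq_sub, zpow_add, Perm.mul_apply, zpow_neg, Perm.inv_def]
  exact (symm_apply_eq _).2 h

theorem IsAperiodic.exists_apply_eq_add_one {T : Perm X} (hT : IsAperiodic T) :
    ∃ g : X → ℤ, ∀ x, g (T x) = g x + 1 := by
  let s := Perm.SameCycle.setoid T
  choose g hg using fun x => (Quotient.mk_out x : Perm.SameCycle T (Quotient.mk s x).out x)
  refine ⟨g, fun x => hT.zpow_apply_injective (Quotient.mk s x).out ?_⟩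
  have hrep : Quotient.mk s (T x) = Quotient.mk s x :=
    Quotient.sound (Perm.SameCycle.refl T x).apply_left
  dsimp only
  rw [← hrep, hg, hrep, add_comm, zpow_one_add, Perm.mul_apply, hg]

variable [MeasurableSpace X]

theorem measurable_fiberwise {ι Y : Type*} [Countable ι] [MeasurableSpace Y] {a : X → ι}
    (ha : ∀ i, MeasurableSet (a ⁻¹' {i})) {f : ∀ i, {x // a x = i} → Y}
    (hf : ∀ i, Measurable (f i)) : Measurable fun x => f (a x) ⟨x, rfl⟩ := by
  intro M hM
  have : (fun x => f (a x) ⟨x, rfl⟩) ⁻¹' M = ⋃ i, Subtype.val '' (f i ⁻¹' M) := by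
    ext x
    simp only [mem_preimage, mem_iUnion, mem_image]
    constructor
    · exact fun hx => ⟨a x, ⟨x, rfl⟩, hx, rfl⟩
    · rintro ⟨i, ⟨y, rfl⟩, hy, rfl⟩
      exact hy
  rw [this]
  exact .iUnion fun i => (ha i).subtype_image (hf i hM)

theorem exists_measurableEquiv_of_fibers {ι : Type*} [Countable ι] {a b : X → ι}
    (ha : ∀ i, MeasurableSet (a ⁻¹' {i})) (hb : ∀ i, MeasurableSet (b ⁻¹' {i}))
    (e : ∀ i, {x // a x = i} ≃ᵐ {y // b y = i}) : ∃ S : X ≃ᵐ X, ∀ x, b (S x) = a x :=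
  ⟨⟨(sigmaFiberEquiv a).symm.trans
      ((sigmaCongrRight fun i => (e i).toEquiv).trans (sigmaFiberEquiv b)),
    measurable_fiberwise ha fun i => measurable_subtype_coe.comp (e i).measurable,
    measurable_fiberwise hb fun i => measurable_subtype_coe.comp (e i).symm.measurable⟩,
    fun x => (e (a x) ⟨x, rfl⟩).2⟩

/-- The level sets of `ψ` cut the atoms of `φ` into slices such that `{φ = i, ψ = k}` can be
mapped onto `{φ ∘ T⁻¹ = i, ψ = k + 1}`: by `T` when the atom is countable, and by the Borel
isomorphism theorem otherwise. -/
structure IsLevelFunction {ι : Type*} (T : Perm X) (φ : X → ι) (ψ : X → ℤ) : Prop where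
  measurable : Measurable ψ
  apply_eq_add_one : ∀ x, (φ ⁻¹' {φ x}).Countable → ψ (T x) = ψ x + 1
  not_countable : ∀ i, ¬(φ ⁻¹' {i}).Countable → ∀ k,
    ¬{x | φ x = i ∧ ψ x = k}.Countable ∧ ¬{y | φ (T.symm y) = i ∧ ψ y = k}.Countable

variable [StandardBorelSpace X]

theorem MeasurableSet.exists_measurable_int_forall_not_countable {Q : Set X}
    (hQ : MeasurableSet Q) (hQc : ¬Q.Countable) :
    ∃ u : X → ℤ, Measurable u ∧ ∀ k, ¬(Q ∩ u ⁻¹' {k}).Countable := by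
  classical
  have := hQ.standardBorel
  have hR : ¬Countable (ℤ × ℝ) := fun h =>
    Cardinal.not_countable_real (countable_univ_iff.2 (Prod.mk_right_injective (0 : ℤ)).countable)
  let e : Q ≃ᵐ ℤ × ℝ := PolishSpace.measurableEquivOfNotCountable (by rwa [countable_coe_iff]) hR
  let u : X → ℤ := fun x => if h : x ∈ Q then (e ⟨x, h⟩).1 else 0
  refine ⟨u, (measurable_fst.comp e.measurable).dite measurable_const hQ, fun k hk => ?_⟩
  have hmem (r : ℝ) : ((e.symm (k, r)) : X) ∈ Q ∩ u ⁻¹' {k} := by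
    refine ⟨(e.symm (k, r)).2, ?_⟩
    simp only [u, mem_preimage, dif_pos (e.symm (k, r)).2, Subtype.coe_eta,
      MeasurableEquiv.apply_symm_apply, mem_singleton_iff]
  have hinj : Function.Injective fun r : ℝ => ((e.symm (k, r)) : X) :=
    Subtype.val_injective.comp (e.symm.injective.comp (Prod.mk_right_injective k))
  exact Cardinal.not_countable_real ((hk.preimage hinj).mono fun r _ => hmem r)

theorem exists_measurable_int_forall_not_countable_preimage {κ : Type*} [Countable κ]
    {c : X → κ} (hc : ∀ j, MeasurableSet (c ⁻¹' {j})) :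
    ∃ u : X → ℤ, Measurable u ∧
      ∀ t : Set κ, ¬(c ⁻¹' t).Countable → ∀ k, ¬(c ⁻¹' t ∩ u ⁻¹' {k}).Countable := by
  have hfiber (j : κ) : ∃ U : X → ℤ, Measurable U ∧
      (¬(c ⁻¹' {j}).Countable → ∀ k, ¬(c ⁻¹' {j} ∩ U ⁻¹' {k}).Countable) := by
    by_cases hj : (c ⁻¹' {j}).Countable
    · exact ⟨0, measurable_const, absurd hj⟩
    · obtain ⟨U, hU, hUc⟩ := (hc j).exists_measurable_int_forall_not_countable hj
      exact ⟨U, hU, fun _ => hUc⟩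
  choose U hUm hUc using hfiber
  refine ⟨fun x => U (c x) x, measurable_fiberwise hc fun j => (hUm j).comp measurable_subtype_coe,
    fun t ht k hk => ?_⟩
  obtain ⟨j, hjt, hj⟩ : ∃ j ∈ t, ¬(c ⁻¹' {j}).Countable := by
    by_contra! h
    exact ht (biUnion_preimage_singleton c t ▸ (to_countable t).biUnion h)
  refine hUc j hj k (hk.mono ?_)
  rintro x ⟨hx, hxk⟩
  rw [mem_preimage, mem_singleton_iff] at hx
  subst hx
  exact ⟨hjt, hxk⟩

variable {ι : Type*} [MeasurableSpace ι] [MeasurableSingletonClass ι]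

theorem IsAperiodic.exists_isLevelFunction [Countable ι] {T : Perm X} (hTa : IsAperiodic T)
    (hT : Measurable T.symm) {φ : X → ι} (hφ : Measurable φ) :
    ∃ ψ : X → ℤ, IsLevelFunction T φ ψ := by
  classical
  set N := {x | (φ ⁻¹' {φ x}).Countable}
  have hN : N.Countable := by
    refine ((to_countable {i | (φ ⁻¹' {i}).Countable}).biUnion fun _ h => h).mono fun x hx => ?_
    exact mem_biUnion (show φ x ∈ {i | (φ ⁻¹' {i}).Countable} from hx) rfl
  set K := N ∪ T '' N
  have hK : K.Countable := hN.union (hN.image T)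
  obtain ⟨g, hg⟩ := hTa.exists_apply_eq_add_one
  set c : X → ι × ι := fun x => (φ x, φ (T.symm x))
  obtain ⟨u, hu, hunc⟩ := exists_measurable_int_forall_not_countable_preimage (c := c)
    fun j => (hφ.prodMk (hφ.comp hT)) (measurableSet_singleton j)
  set ψ := K.piecewise g u
  have hψ_of_mem {x} (hx : x ∈ K) : ψ x = g x := piecewise_eq_of_mem _ _ _ hx
  have hψ_of_notMem {x} (hx : x ∉ K) : ψ x = u x := piecewise_eq_of_notMem _ _ _ hx
  refine ⟨ψ, measurable_of_measurable_on_compl_countable K hK ?_, fun x hx => ?_, fun i hi k => ?_⟩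
  · rw [show Kᶜ.domRestrict ψ = u ∘ Subtype.val from funext fun x => hψ_of_notMem x.2]
    exact hu.comp measurable_subtype_coe
  · rw [hψ_of_mem (Or.inr (mem_image_of_mem T hx)), hψ_of_mem (Or.inl hx), hg]
  have hslice (t : Set (ι × ι)) (ht : ¬(c ⁻¹' t).Countable) :
      ¬(c ⁻¹' t ∩ ψ ⁻¹' {k}).Countable := by
    intro hc
    refine hunc t ht k ((hc.union hK).mono ?_)
    rintro x ⟨hxt, hxk⟩
    by_cases hxK : x ∈ K
    · exact Or.inr hxK
    · exact Or.inl ⟨hxt, by rwa [mem_preimage, hψ_of_notMem hxK]⟩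
  refine ⟨hslice {p | p.1 = i} hi, hslice {p | p.2 = i} fun h => hi ?_⟩
  refine (h.image T.symm).mono fun x hx => ?_
  exact ⟨T x, by simpa [c] using hx, T.symm_apply_apply x⟩

theorem IsLevelFunction.nonempty_measurableEquiv {T : Perm X} {φ : X → ι} {ψ : X → ℤ}
    (hψ : IsLevelFunction T φ ψ) (hT : IsBorelAuto T) (hφ : Measurable φ) (i : ι) (k : ℤ) :
    Nonempty ({x // (φ x, ψ x) = (i, k)} ≃ᵐ {y // (φ (T.symm y), ψ y - 1) = (i, k)}) := by
  by_cases hi : (φ ⁻¹' {i}).Countable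
  · refine ⟨⟨T.subtypeEquiv fun x => ?_, (hT.1.comp measurable_subtype_coe).subtype_mk,
      (hT.2.comp measurable_subtype_coe).subtype_mk⟩⟩
    simp only [Prod.mk.injEq, symm_apply_apply, and_congr_right_iff]
    rintro rfl
    rw [hψ.apply_eq_add_one x hi, add_sub_cancel_right]
  have : StandardBorelSpace {x // (φ x, ψ x) = (i, k)} :=
    ((hφ.prodMk hψ.measurable) (measurableSet_singleton (i, k))).standardBorel
  have : StandardBorelSpace {y // (φ (T.symm y), ψ y - 1) = (i, k)} :=
    (((hφ.comp hT.2).prodMk (hψ.measurable.sub_const 1))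
      (measurableSet_singleton (i, k))).standardBorel
  refine ⟨PolishSpace.measurableEquivOfNotCountable (fun h => (hψ.not_countable i hi k).1 ?_)
    (fun h => (hψ.not_countable i hi (k + 1)).2 ?_)⟩
  · simpa only [Prod.mk.injEq] using
      (countable_coe_iff.1 h : {x | (φ x, ψ x) = (i, k)}.Countable)
  · simpa only [Prod.mk.injEq, sub_eq_iff_eq_add] using
      (countable_coe_iff.1 h : {y | (φ (T.symm y), ψ y - 1) = (i, k)}.Countable)

theorem IsAperiodic.exists_aperiodic_smooth_image_preimage_eq [Countable ι] {T : Perm X}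
    (hTa : IsAperiodic T) (hT : IsBorelAuto T) {φ : X → ι} (hφ : Measurable φ) :
    ∃ S : Perm X, IsBorelAuto S ∧ IsAperiodic S ∧ IsSmooth S ∧
      ∀ t : Set ι, S '' (φ ⁻¹' t) = T '' (φ ⁻¹' t) := by
  obtain ⟨ψ, hψ⟩ := hTa.exists_isLevelFunction hT.2 hφ
  obtain ⟨S, hS⟩ := exists_measurableEquiv_of_fibers
    (fun p => (hφ.prodMk hψ.measurable) (measurableSet_singleton p))
    (fun p => ((hφ.comp hT.2).prodMk (hψ.measurable.sub_const 1)) (measurableSet_singleton p))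
    fun p => (hψ.nonempty_measurableEquiv hT hφ p.1 p.2).some
  have hSψ (x : X) : ψ (S x) = ψ x + 1 := by
    have := congrArg Prod.snd (hS x)
    dsimp only at this
    omega
  have hφS (y : X) : φ (S.symm y) = φ (T.symm y) := by
    simpa using (congrArg Prod.fst (hS (S.symm y))).symm
  refine ⟨S.toEquiv, ⟨S.measurable, S.symm.measurable⟩, isAperiodic_of_apply_eq_add_one _ hSψ,
    isSmooth_of_apply_eq_add_one _ hψ.measurable hSψ, fun t => ?_⟩
  ext y
  rw [image_eq_preimage_symm, image_eq_preimage_symm]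
  exact iff_of_eq (congrArg (· ∈ t) (hφS y))

end

/-- every weak neighborhood of an aperiodic automorphism contains
an aperiodic smooth automorphism. -/
theorem aperiodic_smooth_in_weak_nbhd {X : Type*} [MeasurableSpace X]
    [StandardBorelSpace X]
    (T : Equiv.Perm X) (hT : IsBorelAuto T) (hTa : IsAperiodic T)
    (n : ℕ) (F : Fin n → Set X) (hF : ∀ i, MeasurableSet (F i)) :
    ∃ S : Equiv.Perm X, IsBorelAuto S ∧ IsAperiodic S ∧ IsSmooth S ∧
      ∀ i, (⇑S) '' F i = (⇑T) '' F i := by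
  obtain ⟨S, hSb, hSa, hSs, hS⟩ := hTa.exists_aperiodic_smooth_image_preimage_eq hT
    (φ := fun x => {i | x ∈ F i}) (measurable_set_iff.2 fun i => measurable_mem.2 (hF i))
  exact ⟨S, hSb, hSa, hSs, fun i => hS {s | i ∈ s}⟩
end

section
/- Let P be a periodic Borel automorphism of an uncountable standard Borel space (X, 𝓑) and let F₁, …, Fₙ be Borel subsets of X. Then there exist an aperiodic smooth Borel automorphism S of X and a Borel automorphism Q of X whose support is countable such that (S ∘ Q)(Fᵢ) = P(Fᵢ) for every i = 1, …, n. (Density of aperiodic smooth automorphisms in the quotient group Aut₀(X, 𝓑) = Aut(X, 𝓑)/Ctbl(X) with respect to the quotient weak topology p₀.) -/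
open MeasureTheory Set

/-- `T` is periodic: every point is periodic. -/
def IsPeriodicAuto {X : Type*} (T : Equiv.Perm X) : Prop :=
  ∀ x : X, ∃ n : ℕ, 1 ≤ n ∧ (T ^ n) x = x

section Fiberwise

variable {X Y κ : Type*} [MeasurableSpace X] [MeasurableSpace Y] [MeasurableSpace κ]
  [MeasurableSingletonClass κ] [Countable κ]

theorem measurable_fiberwise_s2 {c : X → κ} (hc : Measurable c) {g : ∀ m, {x // c x = m} → Y}
    (hg : ∀ m, Measurable (g m)) : Measurable fun x => g (c x) ⟨x, rfl⟩ := by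
  intro t ht
  have hpre : (fun x => g (c x) ⟨x, rfl⟩) ⁻¹' t = ⋃ m, Subtype.val '' (g m ⁻¹' t) := by
    ext x
    simp only [mem_preimage, mem_iUnion, mem_image]
    constructor
    · exact fun hx => ⟨c x, ⟨x, rfl⟩, hx, rfl⟩
    · rintro ⟨m, ⟨y, rfl⟩, hy, rfl⟩
      exact hy
  rw [hpre]
  exact .iUnion fun m => (hc (measurableSet_singleton m)).subtype_image (hg m ht)

theorem isBorelAuto_ofFiberEquiv {α β : X → κ} (hα : Measurable α) (hβ : Measurable β)
    (e : ∀ m, {x // α x = m} ≃ᵐ {x // β x = m}) :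
    IsBorelAuto (Equiv.ofFiberEquiv fun m => (e m).toEquiv) :=
  ⟨measurable_fiberwise_s2 hα fun m => measurable_subtype_coe.comp (e m).measurable,
    measurable_fiberwise_s2 hβ fun m => measurable_subtype_coe.comp (e m).symm.measurable⟩

end Fiberwise

section Height

variable {X : Type*} {S : Equiv.Perm X} {h : X → ℤ}

theorem height_zpow_apply (hS : ∀ x, h (S x) = h x + 1) (m : ℤ) (x : X) :
    h ((S ^ m) x) = h x + m := by
  induction m using Int.induction_on generalizing x with
  | zero => simp
  | succ k ih => rw [zpow_add_one, Equiv.Perm.mul_apply, ih, hS]; ring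
  | pred k ih =>
    have hSinv : h (S⁻¹ x) = h x - 1 := by
      have := hS (S⁻¹ x)
      rw [← Equiv.Perm.mul_apply, mul_inv_cancel, Equiv.Perm.one_apply] at this
      omega
    rw [zpow_sub_one, Equiv.Perm.mul_apply, ih, hSinv]; ring

theorem isAperiodic_of_height (hS : ∀ x, h (S x) = h x + 1) : IsAperiodic S := by
  intro x m hm hx
  have := height_zpow_apply hS m x
  rw [hx] at this
  omega

theorem isSmooth_of_height [MeasurableSpace X] (hh : Measurable h) (hS : ∀ x, h (S x) = h x + 1) :
    IsSmooth S := by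
  refine ⟨h ⁻¹' {0}, hh (measurableSet_singleton 0), fun x => ⟨(S ^ (-h x)) x, ⟨?_, _, rfl⟩, ?_⟩⟩
  · rw [mem_preimage, mem_singleton_iff, height_zpow_apply hS]
    ring
  · rintro _ ⟨hy, m, rfl⟩
    have hm : h x + m = 0 := by simpa [height_zpow_apply hS] using hy
    rw [show m = -h x by omega]

end Height

section LevelSets

variable {X Y κ : Type*} [MeasurableSpace X] [MeasurableSpace Y]

theorem exists_measurable_int_forall_preimage_not_countable [StandardBorelSpace Y]
    (hY : ¬ Countable Y) : ∃ g : Y → ℤ, Measurable g ∧ ∀ k, ¬ (g ⁻¹' {k}).Countable := by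
  let e : Y ≃ᵐ ℝ × ℤ := PolishSpace.measurableEquivOfNotCountable hY not_countable
  refine ⟨fun y => (e y).2, measurable_snd.comp e.measurable, fun k hk => ?_⟩
  have hinj : Function.Injective fun r : ℝ => e.symm (r, k) :=
    fun r s hrs => congrArg Prod.fst (e.symm.injective hrs)
  exact not_countable_univ ((hk.preimage hinj).mono fun r _ => by simp)

variable [MeasurableSpace κ] [MeasurableSingletonClass κ] [Countable κ]

theorem exists_measurable_height [StandardBorelSpace X] {c : X → κ} (hc : Measurable c) :
    ∃ h : X → ℤ, Measurable h ∧
      ∀ t : Set κ, ¬ (c ⁻¹' t).Countable → ∀ k, ¬ (c ⁻¹' t ∩ h ⁻¹' {k}).Countable := by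
  have hfib : ∀ m, ∃ g : {x // c x = m} → ℤ, Measurable g ∧
      (¬ (c ⁻¹' {m}).Countable → ∀ k, ¬ (g ⁻¹' {k}).Countable) := by
    intro m
    by_cases hm : (c ⁻¹' {m}).Countable
    · exact ⟨0, measurable_const, fun h => (h hm).elim⟩
    · have := (hc (measurableSet_singleton m)).standardBorel
      obtain ⟨g, hg, hgk⟩ := exists_measurable_int_forall_preimage_not_countable
        (Y := c ⁻¹' {m}) (by rwa [countable_coe_iff])
      exact ⟨g, hg, fun _ => hgk⟩
  choose g hg hgk using hfib
  refine ⟨fun x => g (c x) ⟨x, rfl⟩, measurable_fiberwise_s2 hc hg, fun t ht k hk => ?_⟩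
  obtain ⟨m, hmt, hm⟩ : ∃ m ∈ t, ¬ (c ⁻¹' {m}).Countable := by
    by_contra! hcount
    rw [← biUnion_preimage_singleton] at ht
    exact ht (t.to_countable.biUnion hcount)
  refine hgk m hm k ((hk.preimage Subtype.val_injective).mono ?_)
  rintro ⟨x, rfl⟩ hx
  exact ⟨hmt, hx⟩

end LevelSets

section Shift

variable {X κ : Type*} [MeasurableSpace X] [StandardBorelSpace X] [MeasurableSpace κ]
  [MeasurableSingletonClass κ] [Countable κ]

theorem exists_aperiodic_smooth_of_forall_fiber_not_countable {a b : X → κ}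
    (ha : Measurable a) (hb : Measurable b)
    (ha' : ∀ j, ¬ (a ⁻¹' {j}).Countable) (hb' : ∀ j, ¬ (b ⁻¹' {j}).Countable) :
    ∃ S : Equiv.Perm X, IsBorelAuto S ∧ IsAperiodic S ∧ IsSmooth S ∧ ∀ x, b (S x) = a x := by
  obtain ⟨h, hh, hlevel⟩ := exists_measurable_height (ha.prodMk hb)
  -- `S` will map `{a = j, h = k}` onto `{b = j, h = k + 1}`.
  let α : X → κ × ℤ := fun x => (a x, h x)
  let β : X → κ × ℤ := fun x => (b x, h x - 1)
  have hα : Measurable α := ha.prodMk hh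
  have hβ : Measurable β := hb.prodMk (hh.sub_const 1)
  have hfib : ∀ m, ¬ (α ⁻¹' {m}).Countable ∧ ¬ (β ⁻¹' {m}).Countable := by
    rintro ⟨j, k⟩
    have hαm : α ⁻¹' {(j, k)} = (fun x => (a x, b x)) ⁻¹' (Prod.fst ⁻¹' {j}) ∩ h ⁻¹' {k} := by
      ext x; simp [α, Prod.ext_iff]
    have hβm : β ⁻¹' {(j, k)} =
        (fun x => (a x, b x)) ⁻¹' (Prod.snd ⁻¹' {j}) ∩ h ⁻¹' {k + 1} := by
      ext x; simp [β, Prod.ext_iff, sub_eq_iff_eq_add]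
    rw [hαm, hβm]
    exact ⟨hlevel (Prod.fst ⁻¹' {j}) (ha' j) k, hlevel (Prod.snd ⁻¹' {j}) (hb' j) (k + 1)⟩
  let e : ∀ m, α ⁻¹' {m} ≃ᵐ β ⁻¹' {m} := fun m => by
    have := (hα (measurableSet_singleton m)).standardBorel
    have := (hβ (measurableSet_singleton m)).standardBorel
    exact PolishSpace.measurableEquivOfNotCountable
      (countable_coe_iff.not.2 (hfib m).1) (countable_coe_iff.not.2 (hfib m).2)
  have hmap : ∀ x, β (Equiv.ofFiberEquiv (fun m => (e m).toEquiv) x) = α x :=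
    Equiv.ofFiberEquiv_map _
  have hshift : ∀ x, h (Equiv.ofFiberEquiv (fun m => (e m).toEquiv) x) = h x + 1 := fun x => by
    have := congrArg Prod.snd (hmap x)
    simp only [α, β] at this
    omega
  exact ⟨_, isBorelAuto_ofFiberEquiv hα hβ e, isAperiodic_of_height hshift,
    isSmooth_of_height hh hshift, fun x => congrArg Prod.fst (hmap x)⟩

end Shift

section CountableSupport

variable {X ι : Type*}

theorem measurable_of_countable_setOf_ne [MeasurableSpace X] [MeasurableSingletonClass X]
    {f : X → X} (hf : {x | f x ≠ x}.Countable) : Measurable f := by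
  have := hf.to_subtype
  refine measurable_of_restrict_of_restrict_compl hf.measurableSet (measurable_of_countable _) ?_
  have hid : {x | f x ≠ x}ᶜ.domRestrict f = Subtype.val := funext fun x => not_not.1 x.2
  rw [hid]
  exact measurable_subtype_coe

theorem isBorelAuto_of_countable_setOf_ne [MeasurableSpace X] [MeasurableSingletonClass X]
    {T : Equiv.Perm X} (hT : {x | T x ≠ x}.Countable) : IsBorelAuto T := by
  have hsymm : {x | T.symm x ≠ x} = {x | T x ≠ x} := by
    ext x
    exact not_congr (T.symm_apply_eq.trans eq_comm)
  exact ⟨measurable_of_countable_setOf_ne hT, measurable_of_countable_setOf_ne (hsymm ▸ hT)⟩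

/-- Countable fibres are absorbed whole; an uncountable fibre only needs a countably infinite
part on which `a` and `c` agree, so that both traces on `W` are countably infinite. -/
theorem exists_countable_forall_superset_fiber_equiv {a c : X → ι}
    (hac : {x | a x ≠ c x}.Countable) {j : ι} (e : {x // a x = j} ≃ {x // c x = j}) :
    ∃ E : Set X, E.Countable ∧ ∀ W : Set X, E ⊆ W → W.Countable →
      Nonempty ({x : W // a x = j} ≃ {x : W // c x = j}) := by
  by_cases hj : (a ⁻¹' {j}).Countable
  · have hj' : (c ⁻¹' {j}).Countable := by
      have : Countable {x // a x = j} := hj.to_subtype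
      exact countable_coe_iff.1 (Countable.of_equiv _ e)
    refine ⟨a ⁻¹' {j} ∪ c ⁻¹' {j}, hj.union hj', fun W hEW _ => ⟨?_⟩⟩
    exact (Equiv.subtypeSubtypeEquivSubtype fun hx => hEW (Or.inl hx)).trans
      (e.trans (Equiv.subtypeSubtypeEquivSubtype fun hx => hEW (Or.inr hx)).symm)
  · have hinf : {x | a x = j ∧ c x = j}.Infinite := by
      refine fun hfin => hj ((hfin.countable.union hac).mono fun x hx => ?_)
      by_cases hxc : a x = c x
      · exact Or.inl ⟨hx, hxc ▸ hx⟩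
      · exact Or.inr hxc
    obtain ⟨E, hEsub, hEc, hEinf⟩ := hinf.exists_subset_countable_infinite
    refine ⟨E, hEc, fun W hEW hW => ?_⟩
    have := hW.to_subtype
    have := hEinf.to_subtype
    have : Infinite {x : W // a x = j} := Infinite.of_injective
      (fun y : E => ⟨⟨y, hEW y.2⟩, (hEsub y.2).1⟩) fun y z h => Subtype.ext (by simpa using h)
    have : Infinite {x : W // c x = j} := Infinite.of_injective
      (fun y : E => ⟨⟨y, hEW y.2⟩, (hEsub y.2).2⟩) fun y z h => Subtype.ext (by simpa using h)
    exact nonempty_equiv_of_countable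

theorem exists_perm_comp_eq_of_countable_setOf_ne [Countable ι] {a c : X → ι}
    (hac : {x | a x ≠ c x}.Countable) (e : ∀ j, {x // a x = j} ≃ {x // c x = j}) :
    ∃ Q : Equiv.Perm X, {x | Q x ≠ x}.Countable ∧ ∀ x, c (Q x) = a x := by
  classical
  choose E hEc hEW using fun j => exists_countable_forall_superset_fiber_equiv hac (e j)
  set W := {x | a x ≠ c x} ∪ ⋃ j, E j
  have hW : W.Countable := hac.union (countable_iUnion hEc)
  let σ : Equiv.Perm W := Equiv.ofFiberEquiv fun j =>
    (hEW j W ((subset_iUnion E j).trans subset_union_right) hW).some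
  refine ⟨Equiv.Perm.ofSubtype σ, hW.mono fun x hx => ?_, fun x => ?_⟩
  · by_contra hxW
    exact hx (Equiv.Perm.ofSubtype_apply_of_not_mem σ hxW)
  · by_cases hx : x ∈ W
    · rw [Equiv.Perm.ofSubtype_apply_of_mem σ hx]
      exact Equiv.ofFiberEquiv_map (f := fun w : W => a w) (g := fun w : W => c w) _ ⟨x, hx⟩
    · rw [Equiv.Perm.ofSubtype_apply_of_not_mem σ hx]
      by_contra hxc
      exact hx (Or.inl (Ne.symm hxc))

end CountableSupport

section Labels

variable {X ι : Type*} [MeasurableSpace X] [StandardBorelSpace X] [Uncountable X]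
  [MeasurableSpace ι] [MeasurableSingletonClass ι] [Countable ι]

theorem exists_aperiodic_smooth_comp_eq_off_countable {a b : X → ι} (ha : Measurable a)
    (hb : Measurable b) (e : ∀ j, {x // a x = j} ≃ {x // b x = j}) :
    ∃ S : Equiv.Perm X, IsBorelAuto S ∧ IsAperiodic S ∧ IsSmooth S ∧
      {x | a x ≠ b (S x)}.Countable := by
  classical
  let C := {j | (a ⁻¹' {j}).Countable}
  have hab : ∀ j, (a ⁻¹' {j}).Countable ↔ (b ⁻¹' {j}).Countable := fun j => by
    rw [← countable_coe_iff, ← countable_coe_iff]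
    exact (e j).countable_iff
  obtain ⟨j₀, hj₀⟩ : ∃ j₀, j₀ ∉ C := by
    by_contra! hC
    exact not_countable_univ ((countable_iUnion hC).mono fun x _ => mem_iUnion.2 ⟨a x, rfl⟩)
  let σ : ι → {j // j ∉ C} := fun j => if hj : j ∈ C then ⟨j₀, hj₀⟩ else ⟨j, hj⟩
  have hσ : ∀ j (hj : j ∉ C), σ j = ⟨j, hj⟩ := fun j hj => dif_neg hj
  have hfib : ∀ c : X → ι, (∀ j ∉ C, ¬ (c ⁻¹' {j}).Countable) →
      ∀ j, ¬ ((σ ∘ c) ⁻¹' {j}).Countable := by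
    rintro c hc ⟨j, hj⟩ h
    refine hc j hj (h.mono fun x hx => ?_)
    rw [mem_preimage, mem_singleton_iff] at hx ⊢
    rw [Function.comp_apply, hx, hσ j hj]
  obtain ⟨S, hS, hSap, hSsm, hSab⟩ := exists_aperiodic_smooth_of_forall_fiber_not_countable
    ((measurable_of_countable σ).comp ha) ((measurable_of_countable σ).comp hb)
    (hfib a fun _ hj => hj) (hfib b fun j hj => (hab j).not.1 hj)
  refine ⟨S, hS, hSap, hSsm, ?_⟩
  have hsub : {x | a x ≠ b (S x)} ⊆ a ⁻¹' C ∪ S ⁻¹' (b ⁻¹' C) := by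
    intro x hx
    by_contra hxC
    simp only [mem_union, mem_preimage, not_or] at hxC
    have hσx := hSab x
    rw [Function.comp_apply, Function.comp_apply, hσ _ hxC.1, hσ _ hxC.2] at hσx
    exact hx (congrArg Subtype.val hσx).symm
  have haC : (a ⁻¹' C).Countable := by
    rw [← biUnion_preimage_singleton]
    exact C.to_countable.biUnion fun j hj => hj
  have hbC : (b ⁻¹' C).Countable := by
    rw [← biUnion_preimage_singleton]
    exact C.to_countable.biUnion fun j hj => (hab j).1 hj
  exact (haC.union (hbC.preimage S.injective)).mono hsub

theorem exists_aperiodic_smooth_mul_comp_eq {a b : X → ι} (ha : Measurable a)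
    (hb : Measurable b) (e : ∀ j, {x // a x = j} ≃ {x // b x = j}) :
    ∃ S Q : Equiv.Perm X, IsBorelAuto S ∧ IsAperiodic S ∧ IsSmooth S ∧
      IsBorelAuto Q ∧ {x | Q x ≠ x}.Countable ∧ ∀ x, b ((S * Q) x) = a x := by
  obtain ⟨S, hS, hSap, hSsm, hSc⟩ := exists_aperiodic_smooth_comp_eq_off_countable ha hb e
  obtain ⟨Q, hQc, hQ⟩ := exists_perm_comp_eq_of_countable_setOf_ne hSc fun j =>
    (e j).trans (S.symm.subtypeEquiv fun y => by simp)
  exact ⟨S, Q, hS, hSap, hSsm, isBorelAuto_of_countable_setOf_ne hQc, hQc, hQ⟩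

end Labels

theorem aperiodic_smooth_dense_quotient_weak_general {X : Type*} [MeasurableSpace X]
    [StandardBorelSpace X] [Uncountable X]
    (P : Equiv.Perm X) (hP : IsBorelAuto P)
    (n : ℕ) (F : Fin n → Set X) (hF : ∀ i, MeasurableSet (F i)) :
    ∃ S Q : Equiv.Perm X, IsBorelAuto S ∧ IsAperiodic S ∧ IsSmooth S ∧
      IsBorelAuto Q ∧ {x : X | Q x ≠ x}.Countable ∧
      ∀ i, (⇑(S * Q)) '' F i = (⇑P) '' F i := by
  classical
  let a : X → Fin n → Bool := fun x i => decide (x ∈ F i)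
  have ha : Measurable a := measurable_pi_iff.2 fun i =>
    measurable_to_bool (by convert hF i using 1; ext x; simp [a])
  obtain ⟨S, Q, hS, hSap, hSsm, hQ, hQc, hSQ⟩ := exists_aperiodic_smooth_mul_comp_eq
    ha (ha.comp hP.2) fun j => P.subtypeEquiv fun x => by simp
  refine ⟨S, Q, hS, hSap, hSsm, hQ, hQc, fun i => ?_⟩
  ext y
  have hy := congrFun (hSQ ((S * Q).symm y)) i
  simp only [Equiv.image_eq_preimage_symm, mem_preimage]
  simpa [a] using hy.symm

/-- aperiodic smooth automorphisms are dense in `(Aut₀(X, 𝓑), p₀)`. -/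
theorem aperiodic_smooth_dense_quotient_weak {X : Type*} [MeasurableSpace X]
    [StandardBorelSpace X] [Uncountable X]
    (P : Equiv.Perm X) (hP : IsBorelAuto P) (hPper : IsPeriodicAuto P)
    (n : ℕ) (F : Fin n → Set X) (hF : ∀ i, MeasurableSet (F i)) :
    ∃ S Q : Equiv.Perm X, IsBorelAuto S ∧ IsAperiodic S ∧ IsSmooth S ∧
      IsBorelAuto Q ∧ {x : X | Q x ≠ x}.Countable ∧
      ∀ i, (⇑(S * Q)) '' F i = (⇑P) '' F i :=
  aperiodic_smooth_dense_quotient_weak_general P hP n F hF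
end

section
/- Let T be a Borel automorphism of an uncountable standard Borel space (X, 𝓑). Then there exists a map f : [0,1] → Aut(X, 𝓑) with f(0) = id, f(1) = T, which is continuous against all non-atomic measures: for every non-atomic Borel probability measure μ on X and every t₀ ∈ [0,1], μ(E(f(t), f(t₀))) → 0 as t → t₀. (Path-connectedness of the quotient group Aut₀(X, 𝓑) = Aut(X, 𝓑)/Ctbl(X) in the quotient uniform topology τ₀.) -/
/-!
Fix an injective Borel map `ψ : X → (0, 1)`. Along an aperiodic orbit the values of `ψ` are
distinct and accumulate at their forward and backward `liminf`s, which are orbit invariants, so the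
distance from `ψ x` to them is positive and arbitrarily small along both halves of the orbit.
This yields an injective Borel `θ : X → (0, 1)` whose sublevel sets `{θ < t}` are recurrent for
`T` and `T⁻¹`; the path is `t ↦` the transformation induced by `T` on `{θ < t}` (the identity
elsewhere), which is `id` at `0` and `T` at `1`. If the orbit of `x` misses the level `t₀` (true
off a countable set, as `θ` is injective), the induced maps at `t` and `t₀` agree at `x` for `t`
near `t₀`, since only the finitely many orbit points up to the first return matter; dominated
convergence then gives `μ (E (f t, f t₀)) → 0`.
-/

open MeasureTheory Set
open scoped ENNReal

/-- The set on which `S` and `T` (or their inverses) differ. -/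
def Eset {X : Type*} (S T : Equiv.Perm X) : Set X :=
  {x | S x ≠ T x} ∪ {x | S⁻¹ x ≠ T⁻¹ x}

section BorelPath

open Function Filter Topology

variable {α : Type*}

def IsRecurrentSet (g : α → α) (s : Set α) : Prop :=
  ∀ x ∈ s, ∃ n, g^[n + 1] x ∈ s

section InducedMap

variable (g : α → α) (s : Set α)

lemma exists_iterate_succ_mem_or_forall_notMem (x : α) :
    ∃ n, g^[n + 1] x ∈ s ∨ ∀ m, g^[m + 1] x ∉ s := by
  by_cases h : ∃ n, g^[n + 1] x ∈ s
  · obtain ⟨n, hn⟩ := h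
    exact ⟨n, .inl hn⟩
  · push Not at h
    exact ⟨0, .inr h⟩

open scoped Classical in
/-- The first return time of `x` to `s`; it is `1` when `x` never returns. -/
noncomputable def returnTime (x : α) : ℕ :=
  Nat.find (exists_iterate_succ_mem_or_forall_notMem g s x) + 1

open scoped Classical in
noncomputable def inducedMap (x : α) : α :=
  if x ∈ s then g^[returnTime g s x] x else x

variable {g s}

lemma iterate_returnTime_mem {x : α} (h : ∃ n, g^[n + 1] x ∈ s) :
    g^[returnTime g s x] x ∈ s := by
  classical
  obtain ⟨n, hn⟩ := h
  exact (Nat.find_spec (exists_iterate_succ_mem_or_forall_notMem g s x)).resolve_right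
    fun hnever => hnever n hn

lemma iterate_notMem_of_lt_returnTime {x : α} {m : ℕ} (hm₀ : 0 < m) (hm : m < returnTime g s x) :
    g^[m] x ∉ s := by
  classical
  obtain ⟨k, rfl⟩ := Nat.exists_eq_add_of_lt hm₀
  have := Nat.find_min (exists_iterate_succ_mem_or_forall_notMem g s x)
    (show k < Nat.find _ by unfold returnTime at hm; omega)
  exact fun hk => this (.inl (by simpa using hk))

lemma returnTime_eq {x : α} {n : ℕ} (hn : 0 < n) (hmem : g^[n] x ∈ s)
    (hmin : ∀ m, 0 < m → m < n → g^[m] x ∉ s) : returnTime g s x = n := by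
  have hret : ∃ k, g^[k + 1] x ∈ s := ⟨n - 1, by rwa [Nat.sub_add_cancel hn]⟩
  refine le_antisymm (not_lt.1 fun hlt => iterate_notMem_of_lt_returnTime hn hlt hmem)
    (not_lt.1 fun hlt => hmin _ (Nat.succ_pos _) hlt (iterate_returnTime_mem hret))

lemma inducedMap_empty : inducedMap g ∅ = id := by
  ext x
  simp [inducedMap]

lemma inducedMap_univ : inducedMap g univ = g := by
  ext x
  simp [inducedMap, returnTime_eq (g := g) (s := univ) (x := x) one_pos (mem_univ _)
    (fun m hm₀ hm => absurd hm (by omega))]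

lemma measurable_inducedMap [MeasurableSpace α] (hg : Measurable g) (hs : MeasurableSet s) :
    Measurable (inducedMap g s) := by
  classical
  have hiter : ∀ n, Measurable g^[n] := fun n => hg.iterate n
  have hreturn : Measurable fun x => g^[returnTime g s x] x := by
    refine Measurable.find (f := fun n => g^[n + 1]) (fun n => hiter _) (fun n => ?_) _
    have : {x | g^[n + 1] x ∈ s ∨ ∀ m, g^[m + 1] x ∉ s} =
        g^[n + 1] ⁻¹' s ∪ ⋂ m, g^[m + 1] ⁻¹' sᶜ := by
      ext x
      simp
    rw [this]
    exact (hiter _ hs).union (.iInter fun m => hiter _ hs.compl)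
  exact hreturn.ite hs measurable_id

lemma inducedMap_symm_inducedMap (T : Equiv.Perm α) (hs : IsRecurrentSet T s) (x : α) :
    inducedMap T.symm s (inducedMap T s x) = x := by
  by_cases hx : x ∈ s
  · set n := returnTime T s x
    have hn : 0 < n := Nat.succ_pos _
    have hy : T^[n] x ∈ s := iterate_returnTime_mem (hs x hx)
    have hback : ∀ m ≤ n, (⇑T.symm)^[m] (T^[n] x) = T^[n - m] x := fun m hm => by
      conv_lhs => rw [← Nat.add_sub_cancel' hm, iterate_add_apply]
      exact LeftInverse.iterate T.symm_apply_apply m _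
    have hret : returnTime T.symm s (T^[n] x) = n := by
      refine returnTime_eq hn (by rwa [hback n le_rfl, Nat.sub_self, iterate_zero_apply]) ?_
      intro m hm₀ hm
      rw [hback m hm.le]
      exact iterate_notMem_of_lt_returnTime (by omega) (by omega)
    have hfwd : inducedMap T s x = T^[n] x := if_pos hx
    rw [hfwd, inducedMap, if_pos hy, hret, hback n le_rfl, Nat.sub_self, iterate_zero_apply]
  · have hfix : inducedMap T s x = x := if_neg hx
    rw [hfix, inducedMap, if_neg hx]

noncomputable def inducedPerm (T : Equiv.Perm α) (s : Set α) (hs : IsRecurrentSet T s)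
    (hs' : IsRecurrentSet T.symm s) : Equiv.Perm α where
  toFun := inducedMap T s
  invFun := inducedMap T.symm s
  left_inv := inducedMap_symm_inducedMap T hs
  right_inv x := by simpa using inducedMap_symm_inducedMap T.symm hs' x

lemma isBorelAuto_inducedPerm [MeasurableSpace α] {T : Equiv.Perm α} (hT : IsBorelAuto T)
    (hs : MeasurableSet s) (h : IsRecurrentSet T s) (h' : IsRecurrentSet T.symm s) :
    IsBorelAuto (inducedPerm T s h h') :=
  ⟨measurable_inducedMap hT.1 hs, measurable_inducedMap hT.2 hs⟩

lemma inducedMap_congr {s' : Set α} (hs : IsRecurrentSet g s) {x : α}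
    (h : ∀ i ≤ returnTime g s x, g^[i] x ∈ s' ↔ g^[i] x ∈ s) :
    inducedMap g s' x = inducedMap g s x := by
  by_cases hx : x ∈ s
  · have hret : returnTime g s' x = returnTime g s x :=
      returnTime_eq (Nat.succ_pos _) ((h _ le_rfl).2 (iterate_returnTime_mem (hs x hx)))
        fun m hm₀ hm hm' => iterate_notMem_of_lt_returnTime hm₀ hm ((h m hm.le).1 hm')
    have hx' : x ∈ s' := (h 0 (Nat.zero_le _)).2 hx
    simp only [inducedMap, if_pos hx, if_pos hx', hret]
  · have hx' : x ∉ s' := mt (h 0 (Nat.zero_le _)).1 hx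
    simp only [inducedMap, if_neg hx, if_neg hx']

lemma eventually_inducedMap_eq {ι : Type*} {l : Filter ι} {s : ι → Set α} {s₀ : Set α}
    (hs₀ : IsRecurrentSet g s₀) {x : α} (h : ∀ i, ∀ᶠ τ in l, g^[i] x ∈ s τ ↔ g^[i] x ∈ s₀) :
    ∀ᶠ τ in l, inducedMap g (s τ) x = inducedMap g s₀ x := by
  have hfin := (Set.finite_le_nat (returnTime g s₀ x)).eventually_all.2 fun i _ => h i
  filter_upwards [hfin] with τ hτ
  exact inducedMap_congr hs₀ fun i hi => hτ i hi

end InducedMap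

section OrbitLevel

variable (ψ : α → ℝ)

noncomputable def orbitLiminf (g : α → α) (x : α) : ℝ :=
  liminf (fun n => ψ (g^[n] x)) atTop

noncomputable def orbitGap (T : Equiv.Perm α) (x : α) : ℝ :=
  min |ψ x - orbitLiminf ψ T x| |ψ x - orbitLiminf ψ T.symm x|

/-- Small where `orbitGap` is small and positive; the summand `ψ x ∈ (0, 1)` makes it injective. -/
noncomputable def orbitLevel (T : Equiv.Perm α) (x : α) : ℝ :=
  ((⌊(orbitGap ψ T x)⁻¹⌋₊ : ℝ) + ψ x + 1)⁻¹

variable {ψ}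

lemma orbitLiminf_iterate (g : α → α) (n : ℕ) (x : α) :
    orbitLiminf ψ g (g^[n] x) = orbitLiminf ψ g x := by
  unfold orbitLiminf
  simp_rw [← iterate_add_apply]
  exact liminf_nat_add (fun m => ψ (g^[m] x)) n

lemma orbitLiminf_symm_iterate (T : Equiv.Perm α) (n : ℕ) (x : α) :
    orbitLiminf ψ T.symm (T^[n] x) = orbitLiminf ψ T.symm x := by
  conv_rhs => rw [← LeftInverse.iterate T.symm_apply_apply n x, orbitLiminf_iterate]

lemma orbitGap_symm (T : Equiv.Perm α) : orbitGap ψ T.symm = orbitGap ψ T := by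
  ext x
  simp [orbitGap, min_comm]

lemma orbitLevel_symm (T : Equiv.Perm α) : orbitLevel ψ T.symm = orbitLevel ψ T := by
  unfold orbitLevel
  rw [orbitGap_symm]

lemma frequently_abs_sub_orbitLiminf_lt (hψ : ∀ x, ψ x ∈ Ioo 0 1) (g : α → α) (x : α)
    {ε : ℝ} (hε : 0 < ε) : ∃ᶠ n in atTop, |ψ (g^[n] x) - orbitLiminf ψ g x| < ε := by
  have hbdd : IsBoundedUnder (· ≥ ·) atTop fun n => ψ (g^[n] x) :=
    isBoundedUnder_of ⟨0, fun n => (hψ _).1.le⟩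
  have hcobdd : IsCoboundedUnder (· ≥ ·) atTop fun n => ψ (g^[n] x) :=
    (isBoundedUnder_of ⟨1, fun n => (hψ _).2.le⟩).isCoboundedUnder_ge
  have hbelow := frequently_lt_of_liminf_lt hcobdd (lt_add_of_pos_right (orbitLiminf ψ g x) hε)
  have habove := eventually_lt_of_lt_liminf (sub_lt_self (orbitLiminf ψ g x) hε) hbdd
  exact (hbelow.and_eventually habove).mono fun n hn =>
    abs_sub_lt_iff.2 ⟨by linarith [hn.1], by linarith [hn.2]⟩

lemma injective_iterate_apply {g : α → α} (hg : Injective g) {x : α} (hx : x ∉ periodicPts g) :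
    Injective fun n => g^[n] x := by
  refine Injective.of_lt_imp_ne fun a b hab heq => ?_
  obtain ⟨k, rfl⟩ := Nat.exists_eq_add_of_lt hab
  refine hx (mk_mem_periodicPts (Nat.succ_pos k) ?_)
  rw [add_assoc, iterate_add_apply] at heq
  exact ((hg.iterate a) heq).symm

lemma exists_orbitGap_iterate_pos_lt (hψ : ∀ x, ψ x ∈ Ioo 0 1) (hψi : Injective ψ)
    (T : Equiv.Perm α) {x : α} (hx : x ∉ periodicPts T) {ε : ℝ} (hε : 0 < ε) :
    ∃ n, 0 < orbitGap ψ T (T^[n + 1] x) ∧ orbitGap ψ T (T^[n + 1] x) < ε := by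
  have horbit : Injective fun n => ψ (T^[n] x) := hψi.comp (injective_iterate_apply T.injective hx)
  have hclose := Nat.frequently_atTop_iff_infinite.1 (frequently_abs_sub_orbitLiminf_lt hψ T x hε)
  have hattained : ∀ c, {n | ψ (T^[n] x) = c}.Subsingleton :=
    fun c a ha b hb => horbit (ha.trans hb.symm)
  obtain ⟨m, ⟨hm, hm'⟩, hm₀⟩ := (hclose.sdiff ((hattained (orbitLiminf ψ T x)).finite.union
    (hattained (orbitLiminf ψ T.symm x)).finite)).exists_gt 0
  obtain ⟨n, rfl⟩ : ∃ n, m = n + 1 := ⟨m - 1, by omega⟩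
  simp only [mem_union, mem_ofPred_eq, not_or] at hm'
  refine ⟨n, ?_, ?_⟩
  · rw [orbitGap, orbitLiminf_iterate, orbitLiminf_symm_iterate]
    exact lt_min (abs_pos.2 (sub_ne_zero.2 hm'.1)) (abs_pos.2 (sub_ne_zero.2 hm'.2))
  · rw [orbitGap, orbitLiminf_iterate]
    exact (min_le_left _ _).trans_lt hm

lemma orbitLevel_lt_orbitGap (hψ : ∀ x, ψ x ∈ Ioo 0 1) (T : Equiv.Perm α) {x : α}
    (hx : 0 < orbitGap ψ T x) : orbitLevel ψ T x < orbitGap ψ T x := by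
  refine inv_lt_of_inv_lt₀ hx ?_
  linarith [Nat.lt_floor_add_one (orbitGap ψ T x)⁻¹, (hψ x).1]

lemma orbitLevel_mem_Ioo (hψ : ∀ x, ψ x ∈ Ioo 0 1) (T : Equiv.Perm α) (x : α) :
    orbitLevel ψ T x ∈ Ioo 0 1 := by
  have h : 1 < (⌊(orbitGap ψ T x)⁻¹⌋₊ : ℝ) + ψ x + 1 := by
    linarith [(hψ x).1, Nat.cast_nonneg (α := ℝ) ⌊(orbitGap ψ T x)⁻¹⌋₊]
  exact ⟨inv_pos.2 (by linarith), inv_lt_one_of_one_lt₀ h⟩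

lemma injective_orbitLevel (hψ : ∀ x, ψ x ∈ Ioo 0 1) (hψi : Injective ψ) (T : Equiv.Perm α) :
    Injective (orbitLevel ψ T) := by
  intro x y hxy
  set k := ⌊(orbitGap ψ T x)⁻¹⌋₊
  set l := ⌊(orbitGap ψ T y)⁻¹⌋₊
  have hsum : (k : ℝ) + ψ x = l + ψ y := by
    have := inv_injective hxy
    linarith
  have hfloor : ∀ (j : ℕ) (z : α), ⌊(j : ℝ) + ψ z⌋₊ = j := fun j z => by
    rw [add_comm, Nat.floor_add_natCast (hψ z).1.le, Nat.floor_eq_zero.2 (hψ z).2, zero_add]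
  have hkl : k = l := by rw [← hfloor k x, hsum, hfloor]
  exact hψi (by rw [hkl] at hsum; linarith)

lemma measurable_orbitLevel [MeasurableSpace α] (hψ : Measurable ψ) {T : Equiv.Perm α}
    (hT : Measurable T) (hT' : Measurable T.symm) : Measurable (orbitLevel ψ T) := by
  have hL : ∀ g : α → α, Measurable g → Measurable (orbitLiminf ψ g) := fun g hg =>
    Measurable.liminf fun n => hψ.comp (hg.iterate n)
  have hgap : Measurable (orbitGap ψ T) :=
    ((hψ.sub (hL _ hT)).abs).min ((hψ.sub (hL _ hT')).abs)
  unfold orbitLevel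
  fun_prop

lemma isRecurrentSet_orbitLevel_lt (hψ : ∀ x, ψ x ∈ Ioo 0 1) (hψi : Injective ψ)
    (T : Equiv.Perm α) (t : ℝ) : IsRecurrentSet T {x | orbitLevel ψ T x < t} := by
  intro x hx
  by_cases hper : x ∈ periodicPts T
  · obtain ⟨p, hp, hpx⟩ := mem_periodicPts.1 hper
    obtain ⟨n, rfl⟩ : ∃ n, p = n + 1 := ⟨p - 1, by omega⟩
    exact ⟨n, by rwa [hpx.eq]⟩
  · have ht : 0 < t := (orbitLevel_mem_Ioo hψ T x).1.trans hx
    obtain ⟨n, hpos, hlt⟩ := exists_orbitGap_iterate_pos_lt hψ hψi T hper ht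
    exact ⟨n, (orbitLevel_lt_orbitGap hψ T hpos).trans hlt⟩

lemma exists_injective_level_recurrent_sublevels [MeasurableSpace α] [StandardBorelSpace α]
    {T : Equiv.Perm α} (hT : Measurable T) (hT' : Measurable T.symm) :
    ∃ θ : α → ℝ, Measurable θ ∧ Injective θ ∧ (∀ x, θ x ∈ Ioo 0 1) ∧
      (∀ t, IsRecurrentSet T {x | θ x < t}) ∧ ∀ t, IsRecurrentSet T.symm {x | θ x < t} := by
  have he := measurableEmbedding_embeddingReal α
  set ψ : α → ℝ := fun x => Real.sigmoid (embeddingReal α x)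
  have hψ : ∀ x, ψ x ∈ Ioo 0 1 := fun x => ⟨Real.sigmoid_pos _, Real.sigmoid_lt_one _⟩
  have hψi : Injective ψ := Real.sigmoid_injective.comp he.injective
  have hψm : Measurable ψ := continuous_sigmoid.measurable.comp he.measurable
  refine ⟨orbitLevel ψ T, measurable_orbitLevel hψm hT hT', injective_orbitLevel hψ hψi T,
    orbitLevel_mem_Ioo hψ T, isRecurrentSet_orbitLevel_lt hψ hψi T, ?_⟩
  simpa only [orbitLevel_symm] using isRecurrentSet_orbitLevel_lt hψ hψi T.symm

end OrbitLevel

section Continuity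

variable [MeasurableSpace α]

lemma ae_forall_iterate_ne (μ : Measure α) [NullSingletonClass μ] {g : α → α} (hg : Injective g)
    {θ : α → ℝ} (hθ : Injective θ) (c : ℝ) : ∀ᵐ x ∂μ, ∀ n, θ (g^[n] x) ≠ c :=
  ae_all_iff.2 fun n => measure_eq_zero_iff_ae_notMem.1 <|
    Set.Subsingleton.measure_zero (fun _ ha _ hb => (hθ.comp (hg.iterate n)) (ha.trans hb.symm)) μ

lemma eventually_lt_iff_lt_of_ne {a t₀ : ℝ} (h : a ≠ t₀) : ∀ᶠ t in 𝓝 t₀, (a < t ↔ a < t₀) := by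
  rcases h.lt_or_gt with h | h
  · filter_upwards [eventually_gt_nhds h] with t ht
    exact iff_of_true ht h
  · filter_upwards [eventually_lt_nhds h] with t ht
    exact iff_of_false ht.not_gt h.not_gt

lemma measurableSet_eset [MeasurableEq α] {S T : Equiv.Perm α} (hS : IsBorelAuto S)
    (hT : IsBorelAuto T) : MeasurableSet (Eset S T) :=
  (measurableSet_eq_fun hS.1 hT.1).compl.union (measurableSet_eq_fun hS.2 hT.2).compl

lemma tendsto_measure_eset_inducedPerm [MeasurableEq α] (μ : Measure α) [IsFiniteMeasure μ]
    [NullSingletonClass μ] {T : Equiv.Perm α} (hT : IsBorelAuto T) {θ : α → ℝ}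
    (hθ : Measurable θ) (hθi : Injective θ) (hrec : ∀ t, IsRecurrentSet T {x | θ x < t})
    (hrec' : ∀ t, IsRecurrentSet T.symm {x | θ x < t}) (t₀ : ℝ) :
    Tendsto (fun t => μ (Eset (inducedPerm T {x | θ x < t} (hrec t) (hrec' t))
      (inducedPerm T {x | θ x < t₀} (hrec t₀) (hrec' t₀)))) (𝓝 t₀) (𝓝 0) := by
  set f : ℝ → Equiv.Perm α := fun t => inducedPerm T {x | θ x < t} (hrec t) (hrec' t)
  have hf : ∀ t, IsBorelAuto (f t) := fun t =>
    isBorelAuto_inducedPerm hT (measurableSet_lt hθ measurable_const) _ _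
  have hae : ∀ᵐ x ∂μ, ∀ᶠ t in 𝓝 t₀, x ∉ Eset (f t) (f t₀) := by
    filter_upwards [ae_forall_iterate_ne μ T.injective hθi t₀,
      ae_forall_iterate_ne μ T.symm.injective hθi t₀] with x hx hx'
    filter_upwards [eventually_inducedMap_eq (s := fun t => {x | θ x < t}) (hrec t₀)
        fun i => eventually_lt_iff_lt_of_ne (hx i),
      eventually_inducedMap_eq (s := fun t => {x | θ x < t}) (hrec' t₀)
        fun i => eventually_lt_iff_lt_of_ne (hx' i)] with t hfwd hbwd
    simp only [Eset, mem_union, mem_ofPred_eq, not_or, not_not]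
    exact ⟨hfwd, hbwd⟩
  simpa using tendsto_measure_of_ae_tendsto_indicator_of_isFiniteMeasure (𝓝 t₀)
    MeasurableSet.empty (fun t => measurableSet_eset (hf t) (hf t₀)) (by simpa using hae)

end Continuity

end BorelPath

/-- path-connectedness of `(Aut₀(X, 𝓑), τ₀)`. -/
theorem path_connected_quotient_uniform {X : Type*} [MeasurableSpace X]
    [StandardBorelSpace X]
    (T : Equiv.Perm X) (hT : IsBorelAuto T) :
    ∃ f : Set.Icc (0 : ℝ) 1 → Equiv.Perm X,
      (∀ t, IsBorelAuto (f t)) ∧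
      f ⟨0, by norm_num⟩ = 1 ∧ f ⟨1, by norm_num⟩ = T ∧
      ∀ (μ : Measure X), IsProbabilityMeasure μ → (∀ x : X, μ {x} = 0) →
        ∀ t₀ : Set.Icc (0 : ℝ) 1,
          Filter.Tendsto (fun t => μ (Eset (f t) (f t₀))) (nhds t₀) (nhds 0) := by
  obtain ⟨θ, hθm, hθi, hθ, hrec, hrec'⟩ := exists_injective_level_recurrent_sublevels hT.1 hT.2
  refine ⟨fun t => inducedPerm T {x | θ x < t} (hrec t) (hrec' t), fun t =>
    isBorelAuto_inducedPerm hT (measurableSet_lt hθm measurable_const) _ _, ?_, ?_, ?_⟩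
  · have hempty : {x | θ x < 0} = ∅ := eq_empty_of_forall_notMem fun x hx => (hθ x).1.not_gt hx
    ext x
    simp [inducedPerm, hempty, inducedMap_empty]
  · have huniv : {x | θ x < 1} = univ := eq_univ_of_forall fun x => (hθ x).2
    ext x
    simp [inducedPerm, huniv, inducedMap_univ]
  · intro μ _ hμ t₀
    have : NullSingletonClass μ := ⟨hμ⟩
    exact (tendsto_measure_eset_inducedPerm μ hT hθm hθi hrec hrec' t₀).comp
      continuous_subtype_val.continuousAt
end

section
/- Let P be a periodic Borel automorphism of an uncountable standard Borel space (X, 𝓑). Then there exists a map f : [0,1] → Aut(X, 𝓑) such that f(0) = id, f(1) = P, for every t ∈ [0,1] and every x ∈ X one has f(t)x ∈ {x, Px} (in particular each f(t) is periodic and lies in the full group [P]), and f is continuous against all non-atomic measures: for every non-atomic Borel probability measure μ on X and every t₀ ∈ [0,1], μ(E(f(t), f(t₀))) → 0 as t → t₀. -/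
open MeasureTheory Set
open scoped ENNReal

/-!
Fix an injective Borel map `φ : X → (0, 1)` and let `d x` be the maximum of `φ` over the finite
`P`-orbit of `x`. Then `d` is Borel and `P`-invariant, and each level set of `d` is countable,
being contained in the union of the preimages of a single point under the iterates of `P`.
The path applies `P` on the invariant set `{d < t}` and the identity elsewhere. Its values at
`t` and `t₀` differ only where `d` lies between `t` and `t₀`, and the measure of that set tends
to `μ (d ⁻¹' {t₀}) = 0` for a non-atomic `μ`.
-/

open Function Filter Topology Equiv Equiv.Perm

section OrbitSup

variable {α : Type*} {f : α → α} (φ : α → ℝ)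

variable (f) in
noncomputable def orbitSup (x : α) : ℝ := ⨆ k : ℕ, φ (f^[k] x)

lemma finite_range_iterate_of_mem_periodicPts {x : α} (hx : x ∈ periodicPts f) :
    (range fun k => f^[k] x).Finite := by
  refine (finite_range fun k : Fin (minimalPeriod f x) => f^[k] x).subset ?_
  rintro _ ⟨k, rfl⟩
  exact ⟨⟨k % minimalPeriod f x, Nat.mod_lt _ (minimalPeriod_pos_of_mem_periodicPts hx)⟩,
    iterate_mod_minimalPeriod_eq⟩

lemma range_iterate_apply_self_of_mem_periodicPts {x : α} (hx : x ∈ periodicPts f) :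
    (range fun k => f^[k] (f x)) = range fun k => f^[k] x := by
  have hpos := minimalPeriod_pos_of_mem_periodicPts hx
  apply Subset.antisymm
  · rintro _ ⟨k, rfl⟩
    exact ⟨k + 1, iterate_succ_apply f k x⟩
  · rintro _ ⟨k, rfl⟩
    refine ⟨k + (minimalPeriod f x - 1), ?_⟩
    dsimp only
    rw [← iterate_succ_apply, Nat.succ_eq_add_one, add_assoc, Nat.sub_add_cancel hpos,
      iterate_add_minimalPeriod_eq]

lemma exists_orbitSup_eq {x : α} (hx : x ∈ periodicPts f) :
    ∃ k, φ (f^[k] x) = orbitSup f φ x := by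
  have hfin : (range fun k => φ (f^[k] x)).Finite := by
    simpa only [← range_comp'] using (finite_range_iterate_of_mem_periodicPts hx).image φ
  exact (range_nonempty _).csSup_mem hfin

lemma orbitSup_mem {x : α} (hx : x ∈ periodicPts f) {s : Set ℝ} (hs : ∀ y, φ y ∈ s) :
    orbitSup f φ x ∈ s := by
  obtain ⟨k, hk⟩ := exists_orbitSup_eq φ hx
  exact hk ▸ hs _

lemma orbitSup_apply_self {x : α} (hx : x ∈ periodicPts f) :
    orbitSup f φ (f x) = orbitSup f φ x := by
  simp only [orbitSup, iSup]
  rw [range_comp' φ, range_comp' φ, range_iterate_apply_self_of_mem_periodicPts hx]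

lemma countable_orbitSup_preimage_singleton (hf : Injective f) (hφ : Injective φ)
    (hper : ∀ x, x ∈ periodicPts f) (s : ℝ) : (orbitSup f φ ⁻¹' {s}).Countable := by
  refine (countable_iUnion fun k =>
    (((subsingleton_singleton (a := s)).preimage hφ).preimage (hf.iterate k)).countable).mono ?_
  intro x hx
  obtain ⟨k, hk⟩ := exists_orbitSup_eq φ (hper x)
  exact mem_iUnion.2 ⟨k, hk.trans hx⟩

lemma measurable_orbitSup [MeasurableSpace α] (hf : Measurable f) (hφ : Measurable φ) :
    Measurable (orbitSup f φ) :=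
  Measurable.iSup fun k => hφ.comp (hf.iterate k)

end OrbitSup

lemma IsPeriodicAuto.mem_periodicPts {X : Type*} {T : Perm X} (hT : IsPeriodicAuto T) (x : X) :
    x ∈ periodicPts T := by
  obtain ⟨n, hn, hx⟩ := hT x
  exact mk_mem_periodicPts hn (by rwa [IsPeriodicPt, IsFixedPt, ← coe_pow])

namespace Equiv.Perm

variable {X : Type*} {p q : X → Prop} [DecidablePred p] [DecidablePred q] {P : Perm X}

lemma ofSubtype_subtypePerm_apply (hp : ∀ x, p (P x) ↔ p x) (x : X) :
    ofSubtype (P.subtypePerm hp) x = if p x then P x else x := by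
  split_ifs with h
  exacts [ofSubtype_subtypePerm_of_mem hp h, ofSubtype_subtypePerm_of_not_mem hp h]

lemma inv_ofSubtype_subtypePerm_apply (hp : ∀ x, p (P x) ↔ p x) (x : X) :
    (ofSubtype (P.subtypePerm hp))⁻¹ x = if p x then P⁻¹ x else x := by
  rw [← map_inv, inv_subtypePerm, ofSubtype_subtypePerm_apply]

lemma isBorelAuto_ofSubtype_subtypePerm [MeasurableSpace X] (hP : IsBorelAuto P)
    (hp : ∀ x, p (P x) ↔ p x) (hmeas : MeasurableSet {x | p x}) :
    IsBorelAuto (ofSubtype (P.subtypePerm hp)) := by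
  constructor
  · rw [funext (ofSubtype_subtypePerm_apply hp)]
    exact Measurable.ite hmeas hP.1 measurable_id
  · rw [← inv_def, funext (inv_ofSubtype_subtypePerm_apply hp)]
    exact Measurable.ite hmeas hP.2 measurable_id

lemma eset_ofSubtype_subtypePerm_subset (hp : ∀ x, p (P x) ↔ p x) (hq : ∀ x, q (P x) ↔ q x) :
    Eset (ofSubtype (P.subtypePerm hp)) (ofSubtype (P.subtypePerm hq)) ⊆ {x | ¬(p x ↔ q x)} := by
  intro x hx hpq
  rcases hx with hx | hx <;> apply hx
  · simp only [ofSubtype_subtypePerm_apply, hpq]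
  · simp only [inv_ofSubtype_subtypePerm_apply, hpq]

end Equiv.Perm

section SublevelPerm

variable {X : Type*} {P : Perm X} {d : X → ℝ} (hd : ∀ x, d (P x) = d x)

noncomputable def sublevelPerm (t : ℝ) : Perm X :=
  ofSubtype (P.subtypePerm (p := fun x => d x < t) fun x => by rw [hd])

lemma sublevelPerm_apply (t : ℝ) (x : X) :
    sublevelPerm hd t x = if d x < t then P x else x :=
  ofSubtype_subtypePerm_apply _ x

lemma isBorelAuto_sublevelPerm [MeasurableSpace X] (hP : IsBorelAuto P) (hd_meas : Measurable d)
    (t : ℝ) : IsBorelAuto (sublevelPerm hd t) :=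
  isBorelAuto_ofSubtype_subtypePerm hP _ (measurableSet_lt hd_meas measurable_const)

lemma eset_sublevelPerm_subset (t t₀ : ℝ) :
    Eset (sublevelPerm hd t) (sublevelPerm hd t₀) ⊆ d ⁻¹' Metric.closedBall t₀ (dist t t₀) := by
  refine (eset_ofSubtype_subtypePerm_subset _ _).trans fun x hx => ?_
  simp only [mem_preimage, Metric.mem_closedBall, Real.dist_eq] at hx ⊢
  grind [abs_le]

lemma tendsto_measure_eset_sublevelPerm [MeasurableSpace X] {μ : Measure X} [IsFiniteMeasure μ]
    (hd_meas : Measurable d) (hd_atom : ∀ a, μ (d ⁻¹' {a}) = 0) (t₀ : ℝ) :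
    Tendsto (fun t => μ (Eset (sublevelPerm hd t) (sublevelPerm hd t₀))) (𝓝 t₀) (𝓝 0) := by
  have hball : Tendsto (fun r => μ.map d (Metric.cthickening r {t₀})) (𝓝 0) (𝓝 0) := by
    simpa only [Measure.map_apply hd_meas (measurableSet_singleton _), hd_atom] using
      tendsto_measure_cthickening_of_isClosed (μ := μ.map d) ⟨1, one_pos, measure_ne_top _ _⟩
        isClosed_singleton
  have hdist : Tendsto (fun t => dist t t₀) (𝓝 t₀) (𝓝 0) := by
    simpa using (tendsto_id (x := 𝓝 t₀)).dist (tendsto_const_nhds (x := t₀))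
  refine tendsto_of_tendsto_of_tendsto_of_le_of_le tendsto_const_nhds (hball.comp hdist)
    (fun _ => bot_le) fun t => ?_
  calc μ (Eset (sublevelPerm hd t) (sublevelPerm hd t₀))
      ≤ μ (d ⁻¹' Metric.cthickening (dist t t₀) {t₀}) :=
        measure_mono ((eset_sublevelPerm_subset hd t t₀).trans
          (preimage_mono (Metric.closedBall_subset_cthickening_singleton _ _)))
    _ = μ.map d (Metric.cthickening (dist t t₀) {t₀}) :=
        (Measure.map_apply hd_meas Metric.isClosed_cthickening.measurableSet).symm

end SublevelPerm

/-- a periodic automorphism is connected to the identity by a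
path lying in its full group, continuous against all non-atomic measures. -/
theorem periodic_path_connected {X : Type*} [MeasurableSpace X]
    [StandardBorelSpace X]
    (P : Equiv.Perm X) (hP : IsBorelAuto P) (hPper : IsPeriodicAuto P) :
    ∃ f : Set.Icc (0 : ℝ) 1 → Equiv.Perm X,
      (∀ t, IsBorelAuto (f t)) ∧
      f ⟨0, by norm_num⟩ = 1 ∧ f ⟨1, by norm_num⟩ = P ∧
      (∀ t (x : X), f t x = x ∨ f t x = P x) ∧
      ∀ (μ : Measure X), IsProbabilityMeasure μ → (∀ x : X, μ {x} = 0) →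
        ∀ t₀ : Set.Icc (0 : ℝ) 1,
          Filter.Tendsto (fun t => μ (Eset (f t) (f t₀))) (nhds t₀) (nhds 0) := by
  have hper := hPper.mem_periodicPts
  set φ : X → ℝ := Real.sigmoid ∘ embeddingReal X
  have hφ_meas : Measurable φ :=
    continuous_sigmoid.measurable.comp (measurableEmbedding_embeddingReal X).measurable
  have hφ_inj : Injective φ :=
    Real.sigmoid_injective.comp (measurableEmbedding_embeddingReal X).injective
  set d := orbitSup P φ
  have hd : ∀ x, d (P x) = d x := fun x => orbitSup_apply_self φ (hper x)
  have hd_meas : Measurable d := measurable_orbitSup φ hP.1 hφ_meas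
  have hd_mem : ∀ x, d x ∈ Ioo 0 1 := fun x =>
    orbitSup_mem φ (hper x) fun y => Real.range_sigmoid ▸ mem_range_self _
  refine ⟨fun t => sublevelPerm hd t, fun t => isBorelAuto_sublevelPerm hd hP hd_meas t,
    ?_, ?_, fun t x => ?_, fun μ _ hμ t₀ => ?_⟩
  · ext x
    simp [sublevelPerm_apply, (hd_mem x).1.le]
  · ext x
    simp [sublevelPerm_apply, (hd_mem x).2]
  · rw [sublevelPerm_apply]
    split_ifs <;> simp
  · have : NullSingletonClass μ := ⟨hμ⟩
    have hd_atom (a : ℝ) : μ (d ⁻¹' {a}) = 0 :=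
      (countable_orbitSup_preimage_singleton φ P.injective hφ_inj hper a).measure_zero μ
    exact (tendsto_measure_eset_sublevelPerm hd hd_meas hd_atom t₀).comp
      (continuous_subtype_val.tendsto t₀)
end

section
/- Let T be an aperiodic Borel automorphism of an uncountable standard Borel space (X, 𝓑). Then there exists a map f : [0,1] → Aut(X, 𝓑) such that f(0) = id, f(1) = T, each f(t) belongs to the full group [T], f(t) is periodic for every t ∈ [0,1), and f is continuous against all non-atomic measures: for every non-atomic Borel probability measure μ on X and every t₀ ∈ [0,1], μ(E(f(t), f(t₀))) → 0 as t → t₀. -/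
/-!
Cut every orbit of `T` into finite blocks at the points of a set `C` that every orbit meets in both
directions, and let `T_C` move each point one step along its block, the last point returning to
the first. `T_C` is periodic and lies in the full group of `T`, and its inverse is obtained in the
same way from `T⁻¹` and `T⁻¹ C`.

The path is `t ↦ T_{ρ ≥ t}` for an injective Borel `ρ : X → [0, 1)` all of whose superlevel sets
`{ρ ≥ t}`, `t < 1`, meet every orbit in both directions; it starts at `T_X = id` and ends at `T`.
To build `ρ`, take an injective Borel `ψ : X → (0, 1)`. By aperiodicity `ψ` equals its liminf
along an orbit at most once, so the points where `ψ` is close to, but different from, its forward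
(or backward) orbit liminf recur in the future (or past) of every point; `ρ` measures this
closeness and is made injective by adding `ψ`.

For `t → t₀ < 1` the maps `T_{ρ ≥ t}` and `T_{ρ ≥ t₀}` differ only at points whose finite block
contains a point with `ρ` near `t₀`. These sets shrink to the orbit of the single point where
`ρ = t₀`, a countable set, which is null for every non-atomic `μ`. Near `t₀ = 1` the maps differ
from `T` only on `T⁻¹ {ρ ≥ t}`, which shrinks to `∅`.
-/

open MeasureTheory Set
open scoped ENNReal

open Filter Topology Function

theorem Set.Finite.mem_of_forall_inter_Icc_nonempty {F : Set ℝ} (hF : F.Finite) {c : ℝ}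
    (h : ∀ δ > 0, (F ∩ Icc (c - δ) (c + δ)).Nonempty) : c ∈ F := by
  refine hF.isClosed.closure_subset (Metric.mem_closure_iff.2 fun ε hε ↦ ?_)
  obtain ⟨y, hyF, hy⟩ := h (ε / 2) (half_pos hε)
  refine ⟨y, hyF, ?_⟩
  rw [Real.dist_eq, abs_sub_lt_iff]
  constructor <;> linarith [hy.1, hy.2]

theorem MeasureTheory.exists_pos_measure_le_of_measure_biInter_eq_zero {X : Type*}
    [MeasurableSpace X] {μ : Measure X} [IsFiniteMeasure μ] {s : ℝ → Set X}
    (hs : ∀ δ, MeasurableSet (s δ)) (hmono : Monotone s) (h0 : μ (⋂ δ > 0, s δ) = 0)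
    {ε : ℝ≥0∞} (hε : 0 < ε) : ∃ δ > 0, μ (s δ) ≤ ε := by
  have hlim := tendsto_measure_biInter_gt (μ := μ) (a := (0 : ℝ))
    (fun r _ ↦ (hs r).nullMeasurableSet) (fun _ _ _ hij ↦ hmono hij)
    ⟨1, one_pos, measure_ne_top μ _⟩
  rw [h0] at hlim
  obtain ⟨δ, hδε, hδ⟩ :=
    ((hlim.eventually (eventually_le_nhds hε)).and self_mem_nhdsWithin).exists
  exact ⟨δ, hδ, hδε⟩

namespace Equiv.Perm

variable {X : Type*} {T : Perm X} {C D : Set X} {x : X}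

theorem zpow_apply_zpow_apply (T : Perm X) (i j : ℤ) (x : X) :
    (T ^ i) ((T ^ j) x) = (T ^ (i + j)) x := by
  rw [zpow_add, mul_apply]

theorem apply_zpow_apply (T : Perm X) (i : ℤ) (x : X) : T ((T ^ i) x) = (T ^ (i + 1)) x := by
  rw [add_comm, zpow_one_add, mul_apply]

def MeetsPast (T : Perm X) (C : Set X) : Prop :=
  ∀ x, ∃ n : ℕ, (T ^ (-(n : ℤ))) x ∈ C

/-- `C` meets every backward orbit, and every forward orbit at a positive time. -/
def IsCut (T : Perm X) (C : Set X) : Prop :=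
  MeetsPast T C ∧ MeetsPast T⁻¹ (T ⁻¹' C)

/-- `0` if the backward orbit of `x` never meets `C`. -/
noncomputable def pastHit (T : Perm X) (C : Set X) (x : X) : ℕ :=
  sInf {n : ℕ | (T ^ (-(n : ℤ))) x ∈ C}

open scoped Classical in
/-- The orbits of `T` are cut into blocks that start in `C`; the last point of a block is sent
back to its first point, all other points are moved by `T`. -/
noncomputable def cut (T : Perm X) (C : Set X) (x : X) : X :=
  if T x ∈ C then (T ^ (-(pastHit T C x : ℤ))) x else T x

theorem meetsPast_inv_preimage_iff :
    MeetsPast T⁻¹ (T ⁻¹' C) ↔ ∀ x, ∃ n : ℕ, T ((T ^ n) x) ∈ C := by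
  simp [MeetsPast]

theorem MeetsPast.mono (h : MeetsPast T C) (hCD : C ⊆ D) : MeetsPast T D :=
  fun x ↦ (h x).imp fun _ hn ↦ hCD hn

theorem IsCut.mono (h : IsCut T C) (hCD : C ⊆ D) : IsCut T D :=
  ⟨h.1.mono hCD, h.2.mono (preimage_mono hCD)⟩

theorem IsCut.inv (h : IsCut T C) : IsCut T⁻¹ (T ⁻¹' C) :=
  ⟨h.2, by simpa [IsCut, Set.preimage_preimage] using h.1⟩

theorem pastHit_mem (h : MeetsPast T C) (x : X) : (T ^ (-(pastHit T C x : ℤ))) x ∈ C :=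
  Nat.sInf_mem (h x)

theorem notMem_of_lt_pastHit {n : ℕ} (hn : n < pastHit T C x) : (T ^ (-(n : ℤ))) x ∉ C :=
  Nat.notMem_of_lt_sInf hn

theorem pastHit_le {n : ℕ} (hn : (T ^ (-(n : ℤ))) x ∈ C) : pastHit T C x ≤ n :=
  Nat.sInf_le hn

theorem pastHit_eq {n : ℕ} (hn : (T ^ (-(n : ℤ))) x ∈ C)
    (hmin : ∀ m < n, (T ^ (-(m : ℤ))) x ∉ C) : pastHit T C x = n :=
  (pastHit_le hn).antisymm <| not_lt.1 fun hlt ↦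
    hmin _ hlt (Nat.sInf_mem (s := {n : ℕ | (T ^ (-(n : ℤ))) x ∈ C}) ⟨n, hn⟩)

theorem pastHit_anti (h : MeetsPast T C) (hCD : C ⊆ D) (x : X) :
    pastHit T D x ≤ pastHit T C x :=
  pastHit_le (hCD (pastHit_mem h x))

theorem cut_of_mem (h : T x ∈ C) : cut T C x = (T ^ (-(pastHit T C x : ℤ))) x := if_pos h

theorem cut_of_notMem (h : T x ∉ C) : cut T C x = T x := if_neg h

theorem exists_cut_eq_zpow (T : Perm X) (C : Set X) (x : X) :
    ∃ n : ℤ, cut T C x = (T ^ n) x := by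
  by_cases h : T x ∈ C
  · exact ⟨_, cut_of_mem h⟩
  · exact ⟨1, by rw [cut_of_notMem h, zpow_one]⟩

theorem cut_univ (T : Perm X) : cut T univ = id := by
  funext x
  rw [cut_of_mem (mem_univ _), pastHit_eq (n := 0) (by simp) (by simp)]
  simp

theorem cut_inv_cut (h : MeetsPast T C) (x : X) : cut T⁻¹ (T ⁻¹' C) (cut T C x) = x := by
  by_cases hx : T x ∈ C
  · set a := pastHit T C x
    have hy : T⁻¹ ((T ^ (-(a : ℤ))) x) ∈ T ⁻¹' C := by simpa using pastHit_mem h x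
    have hback : pastHit T⁻¹ (T ⁻¹' C) ((T ^ (-(a : ℤ))) x) = a := by
      refine pastHit_eq ?_ fun m hm ↦ ?_
      · rwa [inv_zpow', neg_neg, zpow_apply_zpow_apply, mem_preimage, apply_zpow_apply,
          show (a : ℤ) + -a + 1 = 1 by ring, zpow_one]
      · rw [inv_zpow', neg_neg, zpow_apply_zpow_apply, mem_preimage, apply_zpow_apply,
          show (m : ℤ) + -a + 1 = -((a - (m + 1) : ℕ) : ℤ) by omega]
        exact notMem_of_lt_pastHit (by omega)
    rw [cut_of_mem hx, cut_of_mem hy, hback, inv_zpow', neg_neg, zpow_apply_zpow_apply]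
    simp
  · rw [cut_of_notMem hx, cut_of_notMem (by simpa using hx)]
    simp

noncomputable def cutPerm (h : IsCut T C) : Perm X where
  toFun := cut T C
  invFun := cut T⁻¹ (T ⁻¹' C)
  left_inv := cut_inv_cut h.1
  right_inv y := by simpa [Set.preimage_preimage] using cut_inv_cut h.2 y

theorem cutPerm_apply (h : IsCut T C) (x : X) : cutPerm h x = cut T C x := rfl

theorem cutPerm_inv (h : IsCut T C) : (cutPerm h)⁻¹ = cutPerm h.inv :=
  Equiv.ext fun _ ↦ rfl

theorem cutPerm_pow_zpow_apply (h : IsCut T C) {i : ℤ} {m : ℕ}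
    (hm : ∀ j : ℕ, 0 < j → j ≤ m → (T ^ (i + j)) x ∉ C) :
    (cutPerm h ^ m) ((T ^ i) x) = (T ^ (i + m)) x := by
  induction m with
  | zero => simp
  | succ m ih =>
    have hnext : T ((T ^ (i + m)) x) ∉ C := by
      have := hm (m + 1) m.succ_pos le_rfl
      rwa [apply_zpow_apply, add_assoc, ← Nat.cast_succ]
    rw [pow_succ', mul_apply, ih fun j hj hjm ↦ hm j hj (by omega), cutPerm_apply,
      cut_of_notMem hnext, apply_zpow_apply]
    push_cast
    ring_nf

theorem cutPerm_pow_apply_of_block (h : IsCut T C) {a b : ℕ} (ha : (T ^ (-(a : ℤ))) x ∈ C)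
    (hb : (T ^ ((b : ℤ) + 1)) x ∈ C) (hblock : ∀ i : ℤ, -a < i → i ≤ b → (T ^ i) x ∉ C) :
    (cutPerm h ^ (a + b + 1)) x = x := by
  have hstart : (cutPerm h ^ a) ((T ^ (-(a : ℤ))) x) = x := by
    rw [cutPerm_pow_zpow_apply h fun j hj hja ↦ hblock _ (by omega) (by omega)]
    simp
  have hlast : pastHit T C ((T ^ (b : ℤ)) x) = a + b := by
    refine pastHit_eq ?_ fun m hm ↦ ?_
    · rwa [zpow_apply_zpow_apply, show -((a + b : ℕ) : ℤ) + b = -a by push_cast; ring]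
    · rw [zpow_apply_zpow_apply]
      exact hblock _ (by omega) (by omega)
  have hcycle : (cutPerm h ^ (a + b + 1)) ((T ^ (-(a : ℤ))) x) = (T ^ (-(a : ℤ))) x := by
    have hend : -(a : ℤ) + ((a + b : ℕ) : ℤ) = b := by push_cast; ring
    rw [pow_succ', mul_apply, cutPerm_pow_zpow_apply h fun j hj hjab ↦ hblock _ (by omega)
      (by omega), hend, cutPerm_apply, cut_of_mem (by rwa [apply_zpow_apply]), hlast,
      zpow_apply_zpow_apply]
    push_cast
    ring_nf
  rw [← hstart, ← mul_apply, ← pow_add, add_comm, pow_add, mul_apply, hcycle]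

theorem exists_cutPerm_pow_apply_eq (h : IsCut T C) (x : X) :
    ∃ n : ℕ, 1 ≤ n ∧ (cutPerm h ^ n) x = x := by
  classical
  have hfut := meetsPast_inv_preimage_iff.1 h.2 x
  refine ⟨_, by omega, cutPerm_pow_apply_of_block h (pastHit_mem h.1 x) (b := Nat.find hfut) ?_
    fun i hai hib hi ↦ ?_⟩
  · rw [← apply_zpow_apply, zpow_natCast]
    exact Nat.find_spec hfut
  · rcases le_or_gt i 0 with hi0 | hi0
    · refine notMem_of_lt_pastHit (T := T) (C := C) (x := x) (n := i.natAbs) (by omega) ?_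
      rwa [show -(i.natAbs : ℤ) = i by omega]
    · refine Nat.find_min hfut (m := (i - 1).toNat) (by omega) ?_
      rwa [← zpow_natCast, apply_zpow_apply, show ((i - 1).toNat : ℤ) + 1 = i by omega]

theorem cut_ne_self_subset (T : Perm X) (C : Set X) : {x | cut T C x ≠ T x} ⊆ T ⁻¹' C :=
  fun _ hx ↦ not_not.1 fun h ↦ hx (cut_of_notMem h)

theorem cut_ne_subset (hD : MeetsPast T D) (hDC : D ⊆ C) :
    {x | cut T C x ≠ cut T D x} ⊆ {x | ∃ i ∈ Icc (-(pastHit T D x : ℤ)) 1, (T ^ i) x ∈ C \ D} := by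
  intro x hx
  by_cases hxD : T x ∈ D
  · have hle : pastHit T C x ≤ pastHit T D x := pastHit_anti hD hDC x
    refine ⟨_, ⟨by omega, by omega⟩, pastHit_mem (hD.mono hDC) x, fun hmem ↦ hx ?_⟩
    rw [cut_of_mem (hDC hxD), cut_of_mem hxD, (pastHit_le hmem).antisymm hle]
  · by_cases hxC : T x ∈ C
    · exact ⟨1, ⟨by omega, le_rfl⟩, by rwa [zpow_one], by rwa [zpow_one]⟩
    · exact absurd (by rw [cut_of_notMem hxC, cut_of_notMem hxD]) hx

section

variable [MeasurableSpace X]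

theorem measurable_zpow (hT : Measurable T) (hT' : Measurable ⇑T⁻¹) (n : ℤ) :
    Measurable (T ^ n) := by
  induction n using Int.induction_on with
  | zero => exact measurable_id
  | succ n ih => rw [zpow_add_one, coe_mul]; exact ih.comp hT
  | pred n ih => rw [zpow_sub_one, coe_mul]; exact ih.comp hT'

theorem measurable_zpow_apply (hT : Measurable T) (hT' : Measurable ⇑T⁻¹) {e : X → ℤ}
    (he : Measurable e) : Measurable fun x ↦ (T ^ e x) x :=
  (measurable_from_prod_countable_left (f := fun p : X × ℤ ↦ (T ^ p.2) p.1)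
    fun n ↦ measurable_zpow hT hT' n).comp (measurable_id.prodMk he)

theorem measurableSet_setOf_exists_zpow_apply_mem (hT : Measurable T) (hT' : Measurable ⇑T⁻¹)
    {p : X → ℕ} (hp : Measurable p) {B : Set X} (hB : MeasurableSet B) :
    MeasurableSet {x | ∃ i ∈ Icc (-(p x : ℤ)) 1, (T ^ i) x ∈ B} := by
  have : {x | ∃ i ∈ Icc (-(p x : ℤ)) 1, (T ^ i) x ∈ B} =
      ⋃ i : ℤ, (p ⁻¹' {n | -(n : ℤ) ≤ i} ∩ {_x | i ≤ 1}) ∩ ⇑(T ^ i) ⁻¹' B := by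
    ext
    simp [and_assoc]
  rw [this]
  exact .iUnion fun i ↦ ((hp trivial).inter (.const _)).inter (measurable_zpow hT hT' i hB)

theorem measurable_pastHit (hT : Measurable T) (hT' : Measurable ⇑T⁻¹) (hC : MeasurableSet C)
    (h : MeetsPast T C) : Measurable (pastHit T C) := by
  classical
  have : pastHit T C = fun x ↦ Nat.find (h x) := funext fun x ↦ Nat.sInf_def (h x)
  rw [this]
  exact measurable_find h fun n ↦ measurable_zpow hT hT' _ hC

theorem measurable_cut (hT : Measurable T) (hT' : Measurable ⇑T⁻¹) (hC : MeasurableSet C)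
    (h : MeetsPast T C) : Measurable (cut T C) := by
  classical
  have : cut T C = fun x ↦ (T ^ (if T x ∈ C then -(pastHit T C x : ℤ) else 1)) x := by
    funext x
    by_cases hx : T x ∈ C
    · rw [cut_of_mem hx, if_pos hx]
    · rw [cut_of_notMem hx, if_neg hx, zpow_one]
  rw [this]
  exact measurable_zpow_apply hT hT' <| Measurable.ite (hT hC)
    ((measurable_from_nat (f := fun n : ℕ ↦ -(n : ℤ))).comp (measurable_pastHit hT hT' hC h))
    measurable_const

end

variable {ρ : X → ℝ} {t : ℝ}

structure IsCutProfile (T : Perm X) (ρ : X → ℝ) : Prop where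
  injective : Injective ρ
  nonneg : ∀ x, 0 ≤ ρ x
  lt_one : ∀ x, ρ x < 1
  isCut : ∀ t < 1, IsCut T {x | t ≤ ρ x}

namespace IsCutProfile

theorem inv (h : IsCutProfile T ρ) : IsCutProfile T⁻¹ (ρ ∘ T) where
  injective := h.injective.comp T.injective
  nonneg _ := h.nonneg _
  lt_one _ := h.lt_one _
  isCut t ht := (h.isCut t ht).inv

noncomputable def path (h : IsCutProfile T ρ) (t : ℝ) : Perm X :=
  if ht : t < 1 then cutPerm (h.isCut t ht) else T

variable (h : IsCutProfile T ρ)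

theorem path_of_lt_one (ht : t < 1) : h.path t = cutPerm (h.isCut t ht) := dif_pos ht

theorem path_of_one_le (ht : 1 ≤ t) : h.path t = T := dif_neg ht.not_gt

theorem path_zero : h.path 0 = 1 := by
  have : {x | (0 : ℝ) ≤ ρ x} = univ := eq_univ_of_forall h.nonneg
  ext x
  rw [h.path_of_lt_one zero_lt_one, cutPerm_apply, this, cut_univ]
  rfl

theorem path_inv (t : ℝ) : (h.path t)⁻¹ = h.inv.path t := by
  by_cases ht : t < 1
  · rw [h.path_of_lt_one ht, h.inv.path_of_lt_one ht, cutPerm_inv]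
  · rw [h.path_of_one_le (not_lt.1 ht), h.inv.path_of_one_le (not_lt.1 ht)]

theorem exists_path_apply_eq_zpow (t : ℝ) (x : X) : ∃ n : ℤ, h.path t x = (T ^ n) x := by
  by_cases ht : t < 1
  · rw [h.path_of_lt_one ht]
    exact exists_cut_eq_zpow T _ x
  · exact ⟨1, by rw [h.path_of_one_le (not_lt.1 ht), zpow_one]⟩

theorem isPeriodicAuto_path (ht : t < 1) : IsPeriodicAuto (h.path t) := by
  rw [h.path_of_lt_one ht]
  exact exists_cutPerm_pow_apply_eq _

theorem path_ne_subset_of_le {s : ℝ} (hst : s ≤ t) {u : ℝ} (htu : t ≤ u) (hu : u < 1) :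
    {x | h.path s x ≠ h.path t x} ⊆
      {x | ∃ i ∈ Icc (-(pastHit T {y | u ≤ ρ y} x : ℤ)) 1, ρ ((T ^ i) x) ∈ Ico s t} := by
  have hsub : {y | t ≤ ρ y} ⊆ {y | s ≤ ρ y} := fun y hy ↦ hst.trans hy
  rw [h.path_of_lt_one (hst.trans_lt (htu.trans_lt hu)), h.path_of_lt_one (htu.trans_lt hu)]
  refine (cut_ne_subset (h.isCut t (htu.trans_lt hu)).1 hsub).trans ?_
  rintro x ⟨i, hi, hxi⟩
  have hp := pastHit_anti (D := {y | t ≤ ρ y}) (h.isCut u hu).1 (fun y hy ↦ htu.trans hy) x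
  exact ⟨i, ⟨le_trans (by omega) hi.1, hi.2⟩, hxi.1, not_le.1 hxi.2⟩

section

variable [MeasurableSpace X]

theorem measurable_path (hT : Measurable T) (hT' : Measurable ⇑T⁻¹) (hρ : Measurable ρ)
    (t : ℝ) : Measurable (h.path t) := by
  by_cases ht : t < 1
  · rw [h.path_of_lt_one ht]
    exact measurable_cut hT hT' (measurableSet_le measurable_const hρ) (h.isCut t ht).1
  · rwa [h.path_of_one_le (not_lt.1 ht)]

theorem isBorelAuto_path (hT : Measurable T) (hT' : Measurable ⇑T⁻¹) (hρ : Measurable ρ)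
    (t : ℝ) : IsBorelAuto (h.path t) := by
  refine ⟨h.measurable_path hT hT' hρ t, ?_⟩
  rw [← coe_inv, h.path_inv]
  exact h.inv.measurable_path hT' (by rwa [inv_inv]) (hρ.comp hT) t

variable (μ : Measure X) [IsFiniteMeasure μ]

theorem tendsto_measure_path_ne_of_lt_one (hT : Measurable T) (hT' : Measurable ⇑T⁻¹)
    (hρ : Measurable ρ) [NullSingletonClass μ] {t₀ : ℝ} (ht₀ : t₀ < 1) :
    Tendsto (fun t ↦ μ {x | h.path t x ≠ h.path t₀ x}) (𝓝 t₀) (𝓝 0) := by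
  obtain ⟨u, ht₀u, hu⟩ := exists_between ht₀
  set p := pastHit T {y | u ≤ ρ y}
  set W : ℝ → Set X :=
    fun δ ↦ {x | ∃ i ∈ Icc (-(p x : ℤ)) 1, ρ ((T ^ i) x) ∈ Icc (t₀ - δ) (t₀ + δ)}
  have hW : ∀ δ, MeasurableSet (W δ) := fun δ ↦ measurableSet_setOf_exists_zpow_apply_mem hT hT'
    (measurable_pastHit hT hT' (measurableSet_le measurable_const hρ) (h.isCut u hu).1)
    (hρ measurableSet_Icc)
  have hmono : Monotone W := fun δ δ' hδ x ⟨i, hi, hx⟩ ↦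
    ⟨i, hi, Icc_subset_Icc (by linarith) (by linarith) hx⟩
  -- a point of `⋂ δ, W δ` has a point of level exactly `t₀` in its finite window
  have hnull : μ (⋂ δ > 0, W δ) = 0 := by
    refine measure_mono_null (t := ⋃ i : ℤ, ⇑(T ^ i) ⁻¹' (ρ ⁻¹' {t₀})) (fun x hx ↦ ?_)
      ((countable_iUnion fun i ↦ ((subsingleton_singleton.preimage h.injective).preimage
        (T ^ i).injective).countable).measure_zero μ)
    simp only [mem_iInter] at hx
    obtain ⟨i, -, hi⟩ := ((finite_Icc _ _).image _).mem_of_forall_inter_Icc_nonempty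
      fun δ hδ ↦ by obtain ⟨i, hi, hxi⟩ := hx δ hδ; exact ⟨_, ⟨i, hi, rfl⟩, hxi⟩
    exact mem_iUnion.2 ⟨i, hi⟩
  refine ENNReal.tendsto_nhds_zero.2 fun ε hε ↦ ?_
  obtain ⟨δ, hδ, hμδ⟩ := exists_pos_measure_le_of_measure_biInter_eq_zero hW hmono hnull hε
  filter_upwards [Iio_mem_nhds ht₀u, Ioo_mem_nhds (show t₀ - δ < t₀ by linarith)
    (show t₀ < t₀ + δ by linarith)] with t htu htδ
  refine (measure_mono fun x hx ↦ ?_).trans hμδ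
  obtain ⟨i, hi, hxi⟩ : ∃ i ∈ Icc (-(p x : ℤ)) 1, ρ ((T ^ i) x) ∈ Ico (min t t₀) (max t t₀) := by
    rcases le_total t t₀ with htt | htt
    · simpa [htt] using h.path_ne_subset_of_le htt ht₀u.le hu hx
    · simpa [htt] using h.path_ne_subset_of_le htt htu.le hu (Ne.symm hx)
  exact ⟨i, hi, Icc_subset_Icc (le_min htδ.1.le (by linarith)) (max_le htδ.2.le (by linarith))
    (Ico_subset_Icc_self hxi)⟩

theorem tendsto_measure_path_ne_of_one_le (hT : Measurable T) (hρ : Measurable ρ) {t₀ : ℝ}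
    (ht₀ : 1 ≤ t₀) : Tendsto (fun t ↦ μ {x | h.path t x ≠ h.path t₀ x}) (𝓝 t₀) (𝓝 0) := by
  set V : ℝ → Set X := fun δ ↦ T ⁻¹' {y | 1 - δ ≤ ρ y}
  have hV : ∀ δ, MeasurableSet (V δ) := fun δ ↦ hT (measurableSet_le measurable_const hρ)
  have hmono : Monotone V := fun δ δ' hδ x (hx : 1 - δ ≤ ρ (T x)) ↦
    show 1 - δ' ≤ ρ (T x) by linarith
  have hempty : ⋂ δ > 0, V δ = ∅ := by
    refine eq_empty_of_forall_notMem fun x hx ↦ ?_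
    have hx' : 1 - (1 - ρ (T x)) / 2 ≤ ρ (T x) :=
      mem_iInter₂.1 hx _ (half_pos (sub_pos.2 (h.lt_one _)))
    linarith [h.lt_one (T x)]
  refine ENNReal.tendsto_nhds_zero.2 fun ε hε ↦ ?_
  obtain ⟨δ, hδ, hμδ⟩ := exists_pos_measure_le_of_measure_biInter_eq_zero (μ := μ) hV hmono
    (by rw [hempty, measure_empty]) hε
  filter_upwards [Ioi_mem_nhds (show 1 - δ < t₀ by linarith)] with t ht
  refine (measure_mono fun x hx ↦ ?_).trans hμδ
  rw [h.path_of_one_le ht₀] at hx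
  by_cases ht1 : t < 1
  · rw [h.path_of_lt_one ht1] at hx
    exact ht.le.trans (show t ≤ ρ (T x) from cut_ne_self_subset T {y | t ≤ ρ y} hx)
  · exact absurd (h.path_of_one_le (not_lt.1 ht1)) fun h' ↦ hx (by rw [h'])

theorem tendsto_measure_path_ne (hT : Measurable T) (hT' : Measurable ⇑T⁻¹) (hρ : Measurable ρ)
    [NullSingletonClass μ] (t₀ : ℝ) :
    Tendsto (fun t ↦ μ {x | h.path t x ≠ h.path t₀ x}) (𝓝 t₀) (𝓝 0) := by
  rcases lt_or_ge t₀ 1 with ht₀ | ht₀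
  · exact h.tendsto_measure_path_ne_of_lt_one μ hT hT' hρ ht₀
  · exact h.tendsto_measure_path_ne_of_one_le μ hT hρ ht₀

theorem tendsto_measure_Eset_path (hT : Measurable T) (hT' : Measurable ⇑T⁻¹)
    (hρ : Measurable ρ) [NullSingletonClass μ] (t₀ : ℝ) :
    Tendsto (fun t ↦ μ (Eset (h.path t) (h.path t₀))) (𝓝 t₀) (𝓝 0) := by
  have hsum := (h.tendsto_measure_path_ne μ hT hT' hρ t₀).add
    (h.inv.tendsto_measure_path_ne μ hT' (by rwa [inv_inv]) (hρ.comp hT) t₀)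
  rw [add_zero] at hsum
  refine tendsto_of_tendsto_of_tendsto_of_le_of_le tendsto_const_nhds hsum (fun _ ↦ zero_le)
    fun t ↦ ?_
  rw [Eset, h.path_inv, h.path_inv]
  exact measure_union_le _ _

end

end IsCutProfile

noncomputable def orbitLiminf (T : Perm X) (ψ : X → ℝ) (x : X) : ℝ :=
  liminf (fun n : ℕ ↦ ψ ((T ^ n) x)) atTop

theorem orbitLiminf_pow_apply (T : Perm X) (ψ : X → ℝ) (n : ℕ) (x : X) :
    orbitLiminf T ψ ((T ^ n) x) = orbitLiminf T ψ x := by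
  simp only [orbitLiminf, ← mul_apply, ← pow_add]
  exact liminf_nat_add (fun m ↦ ψ ((T ^ m) x)) n

noncomputable def recurrenceLevel (T : Perm X) (ψ : X → ℝ) (x : X) : ℝ :=
  max |ψ x - orbitLiminf T ψ x|⁻¹ |ψ x - orbitLiminf T⁻¹ ψ x|⁻¹

theorem isCutProfile_sigmoid {ψ g : X → ℝ} (hψ : Injective ψ) (hψ01 : ∀ x, ψ x ∈ Ico 0 1)
    (hg : ∀ K, IsCut T {x | K ≤ g x}) : IsCutProfile T fun x ↦ Real.sigmoid (⌊g x⌋₊ + ψ x) where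
  injective x y hxy := by
    have hsum := Real.sigmoid_injective hxy
    have hfloor : ⌊g x⌋₊ = ⌊g y⌋₊ := by
      have h1 : (⌊g x⌋₊ : ℝ) < ⌊g y⌋₊ + 1 := by linarith [(hψ01 x).1, (hψ01 y).2]
      have h2 : (⌊g y⌋₊ : ℝ) < ⌊g x⌋₊ + 1 := by linarith [(hψ01 y).1, (hψ01 x).2]
      exact_mod_cast (Nat.lt_succ_iff.1 (by exact_mod_cast h1)).antisymm
        (Nat.lt_succ_iff.1 (by exact_mod_cast h2))
    rw [hfloor, add_right_inj] at hsum
    exact hψ hsum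
  nonneg _ := (Real.sigmoid_pos _).le
  lt_one _ := Real.sigmoid_lt_one _
  isCut t ht := by
    obtain ⟨K, hK⟩ :=
      (Real.tendsto_sigmoid_atTop.eventually (lt_mem_nhds ht)).exists_forall_of_atTop
    refine (hg (K + 1)).mono fun x hx ↦ (hK _ ?_).le
    linarith [Nat.lt_floor_add_one (g x), (hψ01 x).1, show K + 1 ≤ g x from hx]

section

variable [MeasurableSpace X]

theorem measurable_orbitLiminf (hT : Measurable T) {ψ : X → ℝ} (hψ : Measurable ψ) :
    Measurable (orbitLiminf T ψ) :=
  Measurable.liminf fun n ↦ hψ.comp (by rw [coe_pow]; exact hT.iterate n)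

theorem measurable_recurrenceLevel (hT : Measurable T) (hT' : Measurable ⇑T⁻¹) {ψ : X → ℝ}
    (hψ : Measurable ψ) : Measurable (recurrenceLevel T ψ) :=
  (hψ.sub (measurable_orbitLiminf hT hψ)).abs.inv.max
    (hψ.sub (measurable_orbitLiminf hT' hψ)).abs.inv

end

end Equiv.Perm

section Aperiodic

open Equiv Perm

variable {X : Type*} {T : Perm X} {ψ : X → ℝ}

theorem IsAperiodic.inv (hTa : IsAperiodic T) : IsAperiodic T⁻¹ := fun x n hn ↦ by
  simpa [inv_zpow'] using hTa x (-n) (neg_ne_zero.2 hn)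

theorem IsAperiodic.pow_apply_injective (hTa : IsAperiodic T) (x : X) :
    Injective fun n : ℕ ↦ (T ^ n) x := by
  intro m n hmn
  by_contra hne
  refine hTa ((T ^ n) x) ((m : ℤ) - n) (sub_ne_zero.2 (by exact_mod_cast hne)) ?_
  rw [← zpow_natCast, zpow_apply_zpow_apply, sub_add_cancel, zpow_natCast]
  exact hmn

/-- `ψ ∘ T ^ ·` is injective, so it takes its liminf at most once and approaches it elsewhere. -/
theorem IsAperiodic.exists_le_inv_abs_sub_orbitLiminf (hTa : IsAperiodic T) (hψ : Injective ψ)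
    (hψ01 : ∀ x, ψ x ∈ Icc 0 1) (x : X) (K : ℝ) (N : ℕ) :
    ∃ n ≥ N, K ≤ |ψ ((T ^ n) x) - orbitLiminf T ψ ((T ^ n) x)|⁻¹ := by
  set u : ℕ → ℝ := fun n ↦ ψ ((T ^ n) x)
  set L := orbitLiminf T ψ x
  set ε := (|K| + 1)⁻¹
  have hε : 0 < ε := by positivity
  have hbelow : ∀ᶠ n in atTop, L - ε < u n :=
    eventually_lt_of_lt_liminf (u := u) (sub_lt_self L hε)
      (isBoundedUnder_of ⟨0, fun n ↦ (hψ01 _).1⟩)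
  have habove : ∃ᶠ n in atTop, u n < L + ε :=
    frequently_lt_of_liminf_lt (u := u) (isCoboundedUnder_ge_of_le _ fun n ↦ (hψ01 _).2)
      (lt_add_of_pos_right L hε)
  have hne : ∀ᶠ n in atTop, u n ≠ L := by
    by_cases hL : ∃ n₀, u n₀ = L
    · obtain ⟨n₀, hn₀⟩ := hL
      refine eventually_atTop.2 ⟨n₀ + 1, fun n hn hnL ↦ ?_⟩
      have := hTa.pow_apply_injective x (hψ (hnL.trans hn₀.symm))
      omega
    · exact Eventually.of_forall fun n hn ↦ hL ⟨n, hn⟩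
  obtain ⟨n, ⟨⟨hnb, hnL⟩, hnN⟩, hna⟩ :=
    ((hbelow.and hne).and (eventually_ge_atTop N)).and_frequently habove |>.exists
  have hpos : 0 < |u n - L| := abs_pos.2 (sub_ne_zero.2 hnL)
  have hlt : |u n - L| < ε := abs_sub_lt_iff.2 ⟨by linarith, by linarith⟩
  refine ⟨n, hnN, ?_⟩
  rw [orbitLiminf_pow_apply]
  calc K ≤ |K| + 1 := (le_abs_self K).trans (lt_add_one _).le
    _ = ε⁻¹ := (inv_inv _).symm
    _ ≤ |u n - L|⁻¹ := inv_anti₀ hpos hlt.le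

theorem IsAperiodic.isCut_setOf_le_recurrenceLevel (hTa : IsAperiodic T) (hψ : Injective ψ)
    (hψ01 : ∀ x, ψ x ∈ Icc 0 1) (K : ℝ) : IsCut T {x | K ≤ recurrenceLevel T ψ x} := by
  refine ⟨fun x ↦ ?_, meetsPast_inv_preimage_iff.2 fun x ↦ ?_⟩
  · obtain ⟨n, -, hn⟩ := hTa.inv.exists_le_inv_abs_sub_orbitLiminf hψ hψ01 x K 0
    refine ⟨n, ?_⟩
    rw [zpow_neg, zpow_natCast, ← inv_pow]
    exact hn.trans (le_max_right _ _)
  · obtain ⟨n, hn1, hn⟩ := hTa.exists_le_inv_abs_sub_orbitLiminf hψ hψ01 x K 1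
    obtain ⟨m, rfl⟩ := Nat.exists_eq_add_of_le' hn1
    refine ⟨m, ?_⟩
    show K ≤ recurrenceLevel T ψ (T ((T ^ m) x))
    rw [← mul_apply, ← pow_succ']
    exact hn.trans (le_max_left _ _)

theorem IsAperiodic.exists_isCutProfile [MeasurableSpace X] [StandardBorelSpace X]
    (hTa : IsAperiodic T) (hT : Measurable T) (hT' : Measurable ⇑T⁻¹) :
    ∃ ρ : X → ℝ, Measurable ρ ∧ IsCutProfile T ρ := by
  set ψ := Real.sigmoid ∘ embeddingReal X
  have hψm : Measurable ψ :=
    continuous_sigmoid.measurable.comp (measurableEmbedding_embeddingReal X).measurable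
  have hψ : Injective ψ :=
    Real.sigmoid_injective.comp (measurableEmbedding_embeddingReal X).injective
  have hψ01 : ∀ x, ψ x ∈ Ico 0 1 := fun x ↦ ⟨(Real.sigmoid_pos _).le, Real.sigmoid_lt_one _⟩
  refine ⟨_, continuous_sigmoid.measurable.comp ((measurable_from_nat.comp
    (Nat.measurable_floor.comp (measurable_recurrenceLevel hT hT' hψm))).add hψm),
    isCutProfile_sigmoid hψ hψ01 <|
      hTa.isCut_setOf_le_recurrenceLevel hψ fun x ↦ Ico_subset_Icc_self (hψ01 x)⟩

end Aperiodic

/-- an aperiodic automorphism is connected to the identity by a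
path of periodic automorphisms lying in its full group, continuous against
all non-atomic measures. -/
theorem aperiodic_path_connected {X : Type*} [MeasurableSpace X]
    [StandardBorelSpace X]
    (T : Equiv.Perm X) (hT : IsBorelAuto T) (hTa : IsAperiodic T) :
    ∃ f : Set.Icc (0 : ℝ) 1 → Equiv.Perm X,
      (∀ t, IsBorelAuto (f t)) ∧
      f ⟨0, by norm_num⟩ = 1 ∧ f ⟨1, by norm_num⟩ = T ∧
      (∀ t (x : X), ∃ n : ℤ, f t x = (T ^ n) x) ∧
      (∀ t : Set.Icc (0 : ℝ) 1, (t : ℝ) < 1 → IsPeriodicAuto (f t)) ∧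
      ∀ (μ : Measure X), IsProbabilityMeasure μ → (∀ x : X, μ {x} = 0) →
        ∀ t₀ : Set.Icc (0 : ℝ) 1,
          Filter.Tendsto (fun t => μ (Eset (f t) (f t₀))) (nhds t₀) (nhds 0) := by
  obtain ⟨hTm, hTm'⟩ := hT
  obtain ⟨ρ, hρ, h⟩ := hTa.exists_isCutProfile hTm hTm'
  refine ⟨fun t ↦ h.path t, fun t ↦ h.isBorelAuto_path hTm hTm' hρ t, h.path_zero,
    h.path_of_one_le le_rfl, fun t ↦ h.exists_path_apply_eq_zpow t,
    fun t ht ↦ h.isPeriodicAuto_path ht, fun μ _ hμ t₀ ↦ ?_⟩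
  have : NullSingletonClass μ := ⟨hμ⟩
  exact (h.tendsto_measure_Eset_path μ hTm hTm' hρ t₀).comp continuous_subtype_val.continuousAt
end

section
/- Let T be a Borel automorphism of a standard Borel space (X, 𝓑) that is not periodic, i.e. there exists a point x₀ ∈ X with Tⁿx₀ ≠ x₀ for every integer n ≥ 1. Then there exists a Borel set F ⊆ X such that no periodic Borel automorphism P of X satisfies P(F) = T(F). (The set of periodic automorphisms is closed in the weak topology p.) -/
open MeasureTheory Set

/-- the periodic automorphisms are closed in the weak topology:
a non-periodic automorphism has a weak neighborhood free of periodic ones. -/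
theorem periodic_closed_weak {X : Type*} [MeasurableSpace X] [StandardBorelSpace X]
    (T : Equiv.Perm X) (hT : IsBorelAuto T)
    (x₀ : X) (hx₀ : ∀ n : ℕ, 1 ≤ n → (T ^ n) x₀ ≠ x₀) :
    ∃ F : Set X, MeasurableSet F ∧
      ∀ P : Equiv.Perm X, IsBorelAuto P → IsPeriodicAuto P →
        (⇑P) '' F ≠ (⇑T) '' F := by
  classical
  refine ⟨Set.range (fun n : ℕ => (T ^ n) x₀), (Set.countable_range _).measurableSet, ?_⟩
  set F : Set X := Set.range (fun n : ℕ => (T ^ n) x₀) with hF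
  intro P _ hPper hEq
  -- x₀ ∈ F
  have hx₀F : x₀ ∈ F := ⟨0, by simp⟩
  -- T '' F ⊆ F
  have hTF : (⇑T) '' F ⊆ F := by
    rintro _ ⟨_, ⟨n, rfl⟩, rfl⟩
    exact ⟨n + 1, by simp [pow_succ', Equiv.Perm.mul_apply]⟩
  -- x₀ ∉ T '' F
  have hx₀T : x₀ ∉ (⇑T) '' F := by
    rintro ⟨_, ⟨n, rfl⟩, h⟩
    exact hx₀ (n + 1) (Nat.le_add_left _ _) (by simpa [pow_succ', Equiv.Perm.mul_apply] using h)
  -- P maps F into F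
  have hPF : ∀ x ∈ F, P x ∈ F := by
    intro x hx
    exact hTF (hEq ▸ Set.mem_image_of_mem _ hx)
  have hPk : ∀ (k : ℕ) (x : X), x ∈ F → (P ^ k) x ∈ F := by
    intro k
    induction k with
    | zero => intro x hx; simpa using hx
    | succ k ih =>
        intro x hx
        have := hPF _ (ih x hx)
        simpa [pow_succ', Equiv.Perm.mul_apply] using this
  -- x₀ ∈ P '' F
  obtain ⟨n, hn1, hPn⟩ := hPper x₀
  obtain ⟨m, rfl⟩ := Nat.exists_eq_add_of_le hn1
  have hmem : (P ^ m) x₀ ∈ F := hPk m x₀ hx₀F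
  have : P ((P ^ m) x₀) = x₀ := by
    have : (P ^ (1 + m)) x₀ = x₀ := hPn
    simpa [pow_add, pow_one, Equiv.Perm.mul_apply] using this
  exact hx₀T (hEq ▸ ⟨(P ^ m) x₀, hmem, this⟩)
end

section
/- Let P be a periodic Borel automorphism of an uncountable standard Borel space (X, 𝓑) and let F₁, …, Fₙ be Borel subsets of X. Then there exist a Borel automorphism T of X and a Borel set F ⊆ X such that T(Fᵢ) = P(Fᵢ) for every i = 1, …, n, T(F) is a proper subset of F, and no periodic Borel automorphism S of X satisfies S(F) = T(F). (Together with closedness, this shows that the periodic automorphisms form a closed nowhere dense subset of (Aut(X, 𝓑), p).) -/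
open MeasureTheory Set

/-- A map equal to the identity off a countable set is measurable
(in a space where singletons are measurable). -/
lemma measurable_of_eq_off_countable {X : Type*} [MeasurableSpace X]
    [MeasurableSingletonClass X] (f : X → X) (R : Set X) (hR : R.Countable)
    (h : ∀ x ∉ R, f x = x) : Measurable f := by
  intro S hS
  have hEq : f ⁻¹' S = (S \ R) ∪ (f ⁻¹' S ∩ R) := by
    ext x
    by_cases hx : x ∈ R
    · simp [hx]
    · simp [hx, h x hx]
  rw [hEq]
  exact (hS.diff hR.measurableSet).union (hR.mono inter_subset_right).measurableSet

/-- the periodic automorphisms are nowhere dense in the weak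
topology: every weak neighborhood of a periodic automorphism contains an
automorphism together with a weak neighborhood of it free of periodic ones. -/
theorem periodic_nowhere_dense_weak {X : Type*} [MeasurableSpace X]
    [StandardBorelSpace X] [Uncountable X]
    (P : Equiv.Perm X) (hP : IsBorelAuto P) (hPper : IsPeriodicAuto P)
    (n : ℕ) (F : Fin n → Set X) (hF : ∀ i, MeasurableSet (F i)) :
    ∃ (T : Equiv.Perm X) (G : Set X), IsBorelAuto T ∧ MeasurableSet G ∧
      (∀ i, (⇑T) '' F i = (⇑P) '' F i) ∧
      (⇑T) '' G ⊂ G ∧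
      ∀ S : Equiv.Perm X, IsBorelAuto S → IsPeriodicAuto S →
        (⇑S) '' G ≠ (⇑T) '' G := by
  classical
  -- P-orbits
  set o : X → Set X := fun x => {z | ∃ m : ℕ, (P ^ m) x = z} with ho_def
  have ho_self : ∀ x, x ∈ o x := fun x => ⟨0, by simp⟩
  have ho_countable : ∀ x, (o x).Countable := fun x =>
    Set.countable_range (fun m : ℕ => (P ^ m) x)
  have hmul : ∀ (x : X) (nn : ℕ), (P ^ nn) x = x → ∀ m : ℕ, (P ^ (nn * m)) x = x := by
    intro x nn hx m
    induction m with
    | zero => simp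
    | succ m ih =>
      rw [Nat.mul_succ, pow_add, Equiv.Perm.mul_apply, hx]
      exact ih
  have ho_fwd : ∀ x z, z ∈ o x → o z ⊆ o x := by
    rintro x z ⟨m, rfl⟩ w ⟨j, rfl⟩
    exact ⟨j + m, by rw [pow_add, Equiv.Perm.mul_apply]⟩
  have ho_mem_eq : ∀ x z, z ∈ o x → o z = o x := by
    intro x z hz
    refine Subset.antisymm (ho_fwd x z hz) ?_
    obtain ⟨m, rfl⟩ := hz
    obtain ⟨nn, hnn1, hnnx⟩ := hPper x
    have hx : x ∈ o ((P ^ m) x) := by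
      refine ⟨nn * m - m, ?_⟩
      have hm : nn * m - m + m = nn * m :=
        Nat.sub_add_cancel (Nat.le_mul_of_pos_left m hnn1)
      calc (P ^ (nn * m - m)) ((P ^ m) x)
          = (P ^ (nn * m - m + m)) x := by rw [pow_add, Equiv.Perm.mul_apply]
        _ = x := by rw [hm]; exact hmul x nn hnnx m
    exact ho_fwd _ _ hx
  -- an uncountable atom of the algebra generated by the F i
  set c : X → (Fin n → Bool) := fun x i => decide (x ∈ F i) with hc_def
  obtain ⟨b, hb⟩ : ∃ b : Fin n → Bool, ¬(c ⁻¹' {b}).Countable := by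
    by_contra h
    push_neg at h
    have huniv : (Set.univ : Set X) = ⋃ b : Fin n → Bool, c ⁻¹' {b} := by
      ext x; simp
    have : (Set.univ : Set X).Countable := by
      rw [huniv]; exact Set.countable_iUnion h
    exact Set.not_countable_univ this
  set A : Set X := c ⁻¹' {b} with hA_def
  have hA_iff : ∀ x ∈ A, ∀ i, (x ∈ F i ↔ b i = true) := by
    intro x hx i
    have : c x = b := hx
    rw [← this, hc_def]
    simp
  -- the image of A under o is infinite
  have hImgC : ¬(o '' A).Countable := by
    intro hC
    apply hb
    refine Set.Countable.mono ?_ (Set.Countable.sUnion hC ?_)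
    · intro x hx
      exact ⟨o x, ⟨x, hx, rfl⟩, ho_self x⟩
    · rintro t ⟨x, -, rfl⟩
      exact ho_countable x
  have hInf : (o '' A).Infinite := fun hfin => hImgC hfin.countable
  set e : ℤ ↪ ↥(o '' A) := (Denumerable.eqv ℤ).toEmbedding.trans hInf.natEmbedding with he_def
  have hy_ex : ∀ k : ℤ, ∃ x, x ∈ A ∧ o x = (e k : Set X) := by
    intro k
    obtain ⟨x, hxA, hxo⟩ := (e k).2
    exact ⟨x, hxA, hxo⟩
  choose y hyA hyo using hy_ex
  have hy_orb_inj : ∀ j k : ℤ, o (y j) = o (y k) → j = k := by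
    intro j k h
    have : (e j : Set X) = e k := by rw [← hyo, ← hyo, h]
    exact e.injective (Subtype.ext this)
  have hy_inj : Function.Injective y := fun j k h => hy_orb_inj j k (by rw [h])
  have horb_y : ∀ (k j : ℤ), y j ∈ o (y k) → j = k :=
    fun k j h => hy_orb_inj j k (ho_mem_eq _ _ h)
  -- the shift permutation supported on the y's
  set ι : ℤ ↪ X := ⟨y, hy_inj⟩ with hι_def
  set Q : Equiv.Perm X := (Equiv.addRight (1 : ℤ)).viaEmbedding ι with hQ_def
  have hQy : ∀ k : ℤ, Q (y k) = y (k + 1) := fun k =>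
    Equiv.Perm.viaEmbedding_apply (Equiv.addRight (1 : ℤ)) ι k
  have hrange : Set.range ⇑ι = Set.range y := rfl
  have hQo : ∀ x ∉ Set.range y, Q x = x := fun x hx =>
    Equiv.Perm.viaEmbedding_apply_of_notMem (Equiv.addRight (1 : ℤ)) ι x hx
  have hQsy : ∀ k : ℤ, Q.symm (y k) = y (k - 1) := by
    intro k
    have : Q (y (k - 1)) = y k := by rw [hQy]; ring_nf
    rw [← this, Equiv.symm_apply_apply]
  have hQso : ∀ x ∉ Set.range y, Q.symm x = x := by
    intro x hx
    have : Q x = x := hQo x hx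
    conv_lhs => rw [← this]
    exact Equiv.symm_apply_apply Q x
  set T : Equiv.Perm X := Q.trans P with hT_def
  have hT_apply : ∀ x, T x = P (Q x) := fun x => rfl
  -- T is a Borel automorphism
  have hQmeas : Measurable ⇑Q :=
    measurable_of_eq_off_countable _ (Set.range y) (Set.countable_range y) hQo
  have hQsmeas : Measurable ⇑Q.symm :=
    measurable_of_eq_off_countable _ (Set.range y) (Set.countable_range y) hQso
  have hTBorel : IsBorelAuto T := by
    constructor
    · exact hP.1.comp hQmeas
    · have : ⇑T.symm = ⇑Q.symm ∘ ⇑P.symm := by funext x; rfl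
      rw [this]
      exact hQsmeas.comp hP.2
  -- T agrees with P on the images of the F i
  have hQF : ∀ (i : Fin n) (z : X), Q z ∈ F i ↔ z ∈ F i := by
    intro i z
    by_cases hz : z ∈ Set.range y
    · obtain ⟨k, rfl⟩ := hz
      rw [hQy, hA_iff _ (hyA _) i, hA_iff _ (hyA _) i]
    · rw [hQo z hz]
  have hQimg : ∀ i, ⇑Q '' F i = F i := by
    intro i
    ext w
    rw [Equiv.image_eq_preimage_symm, Set.mem_preimage]
    conv_rhs => rw [← Equiv.apply_symm_apply Q w]
    exact (hQF i (Q.symm w)).symm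
  have hTF : ∀ i, ⇑T '' F i = ⇑P '' F i := by
    intro i
    have h1 : ⇑T '' F i = ⇑P '' (⇑Q '' F i) := by
      rw [← Set.image_comp]; rfl
    rw [h1, hQimg]
  -- the wandering set G
  set G : Set X := {y 0} ∪ ⋃ k : ℕ, o (y ((k : ℤ) + 1)) with hG_def
  have hGcnt : G.Countable :=
    (Set.countable_singleton _).union
      (Set.countable_iUnion fun k => ho_countable _)
  have hy0G : y 0 ∈ G := Or.inl rfl
  have ho_step : ∀ (k : ℤ) (z : X), z ∈ o (y k) → P z ∈ o (y k) := by
    rintro k z ⟨m, rfl⟩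
    exact ⟨m + 1, by rw [pow_succ', Equiv.Perm.mul_apply]⟩
  have hPy_mem : ∀ k : ℤ, P (y k) ∈ o (y k) := fun k => ho_step k (y k) (ho_self _)
  -- T '' G ⊆ G
  have hTGsub : ⇑T '' G ⊆ G := by
    rintro w ⟨z, hz, rfl⟩
    rcases hz with hz | hz
    · rw [Set.mem_singleton_iff] at hz
      subst hz
      rw [hT_apply, hQy]
      exact Or.inr (Set.mem_iUnion.mpr ⟨0, by simpa using hPy_mem 1⟩)
    · obtain ⟨k, hk⟩ := Set.mem_iUnion.mp hz
      by_cases hzr : z ∈ Set.range y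
      · obtain ⟨m, rfl⟩ := hzr
        have hm : m = (k : ℤ) + 1 := horb_y _ _ hk
        subst hm
        rw [hT_apply, hQy]
        refine Or.inr (Set.mem_iUnion.mpr ⟨k + 1, ?_⟩)
        have : ((k : ℤ) + 1) + 1 = ((k + 1 : ℕ) : ℤ) + 1 := by push_cast; ring
        rw [← this]
        exact hPy_mem _
      · rw [hT_apply, hQo z hzr]
        exact Or.inr (Set.mem_iUnion.mpr ⟨k, ho_step _ _ hk⟩)
  -- y 0 is not in T '' G
  have hy0not : y 0 ∉ ⇑T '' G := by
    rintro ⟨z, hz, hTz⟩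
    rcases hz with hz | hz
    · rw [Set.mem_singleton_iff] at hz
      subst hz
      rw [hT_apply, hQy] at hTz
      have : (0 : ℤ) = 1 := horb_y 1 0 (hTz ▸ hPy_mem 1)
      exact absurd this (by norm_num)
    · obtain ⟨k, hk⟩ := Set.mem_iUnion.mp hz
      by_cases hzr : z ∈ Set.range y
      · obtain ⟨m, rfl⟩ := hzr
        have hm : m = (k : ℤ) + 1 := horb_y _ _ hk
        subst hm
        rw [hT_apply, hQy] at hTz
        have : (0 : ℤ) = (k : ℤ) + 1 + 1 := horb_y _ 0 (hTz ▸ hPy_mem _)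
        omega
      · rw [hT_apply, hQo z hzr] at hTz
        have : (0 : ℤ) = (k : ℤ) + 1 := horb_y _ 0 (hTz ▸ ho_step _ _ hk)
        omega
  have hTGss : ⇑T '' G ⊂ G := by
    rw [Set.ssubset_def]
    exact ⟨hTGsub, fun h => hy0not (h hy0G)⟩
  refine ⟨T, G, hTBorel, hGcnt.measurableSet, hTF, hTGss, ?_⟩
  -- no periodic automorphism maps G to T '' G
  intro S _ hSper himg
  have hsub : ⇑S '' G ⊆ G := himg ▸ hTGsub
  have hiter : ∀ (j : ℕ) (x : X), x ∈ G → (S ^ j) x ∈ G := by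
    intro j
    induction j with
    | zero => simp
    | succ j ih =>
      intro x hx
      have h1 : (S ^ (j + 1)) x = (S ^ j) (S x) := by
        rw [pow_succ, Equiv.Perm.mul_apply]
      rw [h1]
      exact ih (S x) (hsub ⟨x, hx, rfl⟩)
  have hGsub : G ⊆ ⇑S '' G := by
    intro x hx
    obtain ⟨nn, h1, hnx⟩ := hSper x
    obtain ⟨m, rfl⟩ : ∃ m, nn = m + 1 := ⟨nn - 1, by omega⟩
    refine ⟨(S ^ m) x, hiter m x hx, ?_⟩
    rw [← Equiv.Perm.mul_apply, ← pow_succ']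
    exact hnx
  have hSG : ⇑S '' G = G := Subset.antisymm hsub hGsub
  exact hTGss.ne (himg.symm.trans hSG)
end
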